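/- arXiv:2112.10287 — 10 statements merged into one kernel-verified Lean document; each statement's English description precedes it below -/
import Mathlib

section
/- A tensor P of format d has rank at most one if and only if its Möbius transform φ(P) has rank at most one. -/
/-- A tensor of format `m : ι → ℕ` has rank at most one if its entries factor as a
product of vectors. -/
def RankOneOn {ι : Type} [Fintype ι] {m : ι → ℕ} (T : (∀ i, Fin (m i)) → ℝ) : Prop :=
  ∃ v : ∀ i, Fin (m i) → ℝ, ∀ y, T y = ∏ i, v i (y i)

/-- The Möbius transform of a tensor: the entry at `x` is the sum of the entries `P z`
over all `z` agreeing with `x` at every coordinate where `x` is not the last state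
(the last state `d i - 1` plays the role of the marginalization symbol `+`). -/
def mobius {n : ℕ} (d : Fin n → ℕ) (P : (∀ i, Fin (d i)) → ℝ) : (∀ i, Fin (d i)) → ℝ :=
  fun x => ∑ z : ∀ i, Fin (d i),
    if ∀ i, (x i : ℕ) ≠ d i - 1 → z i = x i then P z else 0

/-- A general "tensored kernel" transform of a tensor. -/
def kerMap {n : ℕ} (d : Fin n → ℕ) (K : ∀ i, Fin (d i) → Fin (d i) → ℝ)
    (P : (∀ i, Fin (d i)) → ℝ) : (∀ i, Fin (d i)) → ℝ :=
  fun x => ∑ z : ∀ i, Fin (d i), (∏ i, K i (x i) (z i)) * P z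

lemma rankOne_kerMap {n : ℕ} (d : Fin n → ℕ) (K : ∀ i, Fin (d i) → Fin (d i) → ℝ)
    (P : (∀ i, Fin (d i)) → ℝ) (h : RankOneOn P) : RankOneOn (kerMap d K P) := by
  obtain ⟨v, hv⟩ := h
  refine ⟨fun i a => ∑ b, K i a b * v i b, fun x => ?_⟩
  rw [Fintype.prod_sum]
  simp only [kerMap, hv, ← Finset.prod_mul_distrib]

lemma kerMap_comp {n : ℕ} (d : Fin n → ℕ) (K L : ∀ i, Fin (d i) → Fin (d i) → ℝ)
    (hKL : ∀ i a b, ∑ y, K i a y * L i y b = if b = a then 1 else 0)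
    (P : (∀ i, Fin (d i)) → ℝ) : kerMap d K (kerMap d L P) = P := by
  funext x
  unfold kerMap
  simp only [Finset.mul_sum]
  rw [Finset.sum_comm]
  have step1 : ∀ y : ∀ i, Fin (d i),
      (∑ z : ∀ i, Fin (d i), (∏ i, K i (x i) (z i)) * ((∏ i, L i (z i) (y i)) * P y))
      = (∏ i, ∑ b, K i (x i) b * L i b (y i)) * P y := by
    intro y
    rw [Fintype.prod_sum, Finset.sum_mul]
    refine Finset.sum_congr rfl fun z _ => ?_
    rw [← mul_assoc, ← Finset.prod_mul_distrib]
  calc (∑ y : ∀ i, Fin (d i), ∑ z : ∀ i, Fin (d i),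
        (∏ i, K i (x i) (z i)) * ((∏ i, L i (z i) (y i)) * P y))
      = ∑ y : ∀ i, Fin (d i), (∏ i, ∑ b, K i (x i) b * L i b (y i)) * P y :=
        Finset.sum_congr rfl fun y _ => step1 y
    _ = ∑ y : ∀ i, Fin (d i), (∏ i, if y i = x i then (1:ℝ) else 0) * P y := by
        simp only [hKL]
    _ = P x := by
        rw [Finset.sum_eq_single x]
        · simp
        · intro y _ hy
          have : ¬ ∀ i ∈ Finset.univ, y i = x i :=
            fun h => hy (funext fun i => h i (Finset.mem_univ i))
          simp only [Finset.prod_boole]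
          rw [if_neg this, zero_mul]
        · simp

/-- A tensor `P` of format `d` has rank at most one if and only if its
Möbius transform `φ(P)` has rank at most one. -/
theorem rankOne_iff_mobius_rankOne (n : ℕ) (hn : 1 ≤ n) (d : Fin n → ℕ)
    (hd : ∀ i, 1 ≤ d i) (P : (∀ i, Fin (d i)) → ℝ) :
    RankOneOn P ↔ RankOneOn (mobius d P) := by
  set M : ∀ i, Fin (d i) → Fin (d i) → ℝ :=
    fun i a b => if (a : ℕ) = d i - 1 ∨ b = a then 1 else 0 with hM
  set N : ∀ i, Fin (d i) → Fin (d i) → ℝ :=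
    fun i a b => if (a : ℕ) = d i - 1 then (if b = a then 1 else -1)
      else (if b = a then 1 else 0) with hN
  have hmob : mobius d P = kerMap d M P := by
    funext x
    unfold mobius kerMap
    refine Finset.sum_congr rfl fun z _ => ?_
    simp only [hM, Finset.prod_boole]
    by_cases h : ∀ i, (x i : ℕ) ≠ d i - 1 → z i = x i
    · rw [if_pos h, if_pos, one_mul]
      intro i _
      by_cases hx : (x i : ℕ) = d i - 1
      · exact Or.inl hx
      · exact Or.inr (h i hx)
    · rw [if_neg h, if_neg, zero_mul]
      intro hc
      exact h fun i hxi => (hc i (Finset.mem_univ i)).resolve_left hxi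
  have hNM : ∀ i (a b : Fin (d i)), ∑ y, N i a y * M i y b = if b = a then 1 else 0 := by
    intro i a b
    by_cases ha : (a : ℕ) = d i - 1
    · have hab : ∀ y : Fin (d i), ((y : ℕ) = d i - 1) = (y = a) := by
        intro y
        refine propext ⟨fun hy => Fin.ext (hy.trans ha.symm), fun hy => by rw [hy, ha]⟩
      have key : ∀ y : Fin (d i), N i a y * M i y b =
          (if y = a then (1:ℝ) else -1) * (if y = a ∨ b = y then 1 else 0) := by
        intro y
        simp only [hN, hM, if_pos ha, hab y]
      simp only [key]
      rw [← Finset.add_sum_erase _ _ (Finset.mem_univ a), if_pos rfl,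
        if_pos (Or.inl rfl), mul_one]
      by_cases hb : b = a
      · rw [if_pos hb, Finset.sum_eq_zero, add_zero]
        intro y hy
        have hy' : y ≠ a := Finset.ne_of_mem_erase hy
        rw [if_neg hy', if_neg, mul_zero]
        push_neg
        exact ⟨hy', fun h => hy' (by rw [← h, hb])⟩
      · rw [if_neg hb, Finset.sum_eq_single b]
        · rw [if_neg hb, if_pos (Or.inr rfl)]; ring
        · intro y hy hyb
          have hy' : y ≠ a := Finset.ne_of_mem_erase hy
          rw [if_neg hy', if_neg, mul_zero]
          push_neg
          exact ⟨hy', fun h => hyb h.symm⟩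
        · intro hbmem
          exact absurd (Finset.mem_erase.mpr ⟨hb, Finset.mem_univ b⟩) hbmem
    · simp only [hN, hM, if_neg ha]
      rw [Finset.sum_eq_single a]
      · by_cases hb : b = a <;> simp [hb, ha]
      · intro y _ hy; rw [if_neg hy, zero_mul]
      · simp
  constructor
  · intro h
    rw [hmob]
    exact rankOne_kerMap d M P h
  · intro h
    have := rankOne_kerMap d N _ h
    rwa [hmob, kerMap_comp d N M hNM P] at this
end

section
/- Suppose a tensor P of format d is given by P(x) = λ · ∏ i, θ^(i)_{x i}, where λ ∈ ℝ and for each i the parameters θ^(i) : Fin (d i) → ℝ satisfy θ^(i)_{d i − 1} = 1 − ∑_{k < d i − 1} θ^(i)_k. Then for every index x, the Möbius transform satisfies φ(P)(x) = λ · ∏_{i ∈ supp(x)} θ^(i)_{x i}. -/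
/-- The support of an index `x`: the set of coordinates where `x` is not the last state. -/
def suppIdx {n : ℕ} {d : Fin n → ℕ} (x : ∀ i, Fin (d i)) : Finset (Fin n) :=
  Finset.univ.filter fun i => (x i : ℕ) ≠ d i - 1

/-- If `P(x) = λ · ∏ i, θ⁽ⁱ⁾_{x i}` where each `θ⁽ⁱ⁾` satisfies
`θ⁽ⁱ⁾_{d i - 1} = 1 - ∑_{k < d i - 1} θ⁽ⁱ⁾_k`, then the Möbius transform satisfies
`φ(P)(x) = λ · ∏_{i ∈ supp(x)} θ⁽ⁱ⁾_{x i}`. -/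
theorem mobius_of_rankOne_param (n : ℕ) (hn : 1 ≤ n) (d : Fin n → ℕ)
    (hd : ∀ i, 1 ≤ d i) (P : (∀ i, Fin (d i)) → ℝ)
    (l : ℝ) (θ : ∀ i, Fin (d i) → ℝ)
    (hθ : ∀ i, θ i ⟨d i - 1, by have := hd i; omega⟩ =
      1 - ∑ k ∈ Finset.univ.filter (fun k : Fin (d i) => (k : ℕ) < d i - 1), θ i k)
    (hP : ∀ x, P x = l * ∏ i, θ i (x i)) :
    ∀ x, mobius d P x = l * ∏ i ∈ suppIdx x, θ i (x i) := by

  intro x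
  have hsum : ∀ i, ∑ k : Fin (d i), θ i k = 1 := by
    intro i
    rw [← Finset.sum_filter_add_sum_filter_not Finset.univ
      (fun k : Fin (d i) => (k : ℕ) < d i - 1)]
    have hset : Finset.univ.filter (fun k : Fin (d i) => ¬ (k : ℕ) < d i - 1)
        = {⟨d i - 1, by have := hd i; omega⟩} := by
      ext k
      simp only [Finset.mem_filter, Finset.mem_univ, true_and, Finset.mem_singleton,
        Fin.ext_iff]
      have := k.isLt
      omega
    rw [hset, Finset.sum_singleton, hθ i]
    ring
  have key : ∀ z : ∀ i, Fin (d i),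
      (if ∀ i, (x i : ℕ) ≠ d i - 1 → z i = x i then P z else 0)
        = l * ∏ i, (if ((x i : ℕ) ≠ d i - 1 → z i = x i) then θ i (z i) else 0) := by
    intro z
    by_cases h : ∀ i, (x i : ℕ) ≠ d i - 1 → z i = x i
    · rw [if_pos h, hP]
      congr 1
      apply Finset.prod_congr rfl
      intro i _
      rw [if_pos (h i)]
    · rw [if_neg h]
      push_neg at h
      obtain ⟨i, hi1, hi2⟩ := h
      have : ∏ i, (if ((x i : ℕ) ≠ d i - 1 → z i = x i) then θ i (z i) else 0) = 0 :=
        Finset.prod_eq_zero (Finset.mem_univ i) (by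
          rw [if_neg]; intro hc; exact hi2 (hc hi1))
      rw [this, mul_zero]
  unfold mobius
  simp_rw [key]
  rw [← Finset.mul_sum]
  congr 1
  have := Finset.prod_univ_sum (fun i : Fin n => (Finset.univ : Finset (Fin (d i))))
    (fun i k => if ((x i : ℕ) ≠ d i - 1 → k = x i) then θ i k else 0)
  rw [Fintype.piFinset_univ] at this
  rw [← this]
  have hcoord : ∀ i : Fin n,
      (∑ k : Fin (d i), if ((x i : ℕ) ≠ d i - 1 → k = x i) then θ i k else 0)
        = if (x i : ℕ) ≠ d i - 1 then θ i (x i) else 1 := by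
    intro i
    by_cases hi : (x i : ℕ) ≠ d i - 1
    · rw [if_pos hi]
      rw [Finset.sum_congr rfl (fun k _ => by
        simp only [hi, ne_eq, not_false_eq_true, forall_true_left] : ∀ k ∈ Finset.univ,
          (if ((x i : ℕ) ≠ d i - 1 → k = x i) then θ i k else 0)
            = if k = x i then θ i k else 0)]
      simp
    · rw [if_neg hi]
      have : ∀ k : Fin (d i), ((x i : ℕ) ≠ d i - 1 → k = x i) := by
        intro k hc; exact absurd hc hi
      rw [Finset.sum_congr rfl (fun k _ => if_pos (this k))]
      exact hsum i
  rw [Finset.prod_congr rfl (fun i _ => hcoord i)]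
  rw [suppIdx, ← Finset.prod_filter]
end

section
/- Let Σ be a simplicial complex on Fin n and let P be a tensor of format d whose entries sum to 1. Then P lies in the marginal independence model M_Σ if and only if there exist tensors R and L of format d such that R has rank at most one, L_σ = 0 for every σ ∈ Σ, and P = R + L. -/
/-- The marginalization of a tensor `P` to a finset `σ` of coordinates: the entry at
`y : ∀ i : σ, Fin (d i)` is the sum of `P x` over all `x` agreeing with `y` on `σ`. -/
def marg {n : ℕ} {d : Fin n → ℕ} (P : (∀ i, Fin (d i)) → ℝ) (σ : Finset (Fin n)) :
    (∀ i : σ, Fin (d i)) → ℝ :=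
  fun y => ∑ x : ∀ i, Fin (d i), if ∀ i : σ, x i = y i then P x else 0

open Finset

lemma sum_prod_pi {ι : Type} [Fintype ι] [DecidableEq ι] {m : ι → ℕ}
    (W : ∀ j, Fin (m j) → ℝ) :
    ∑ y : ∀ j, Fin (m j), ∏ j, W j (y j) = ∏ j, ∑ b, W j b := by
  rw [Finset.prod_univ_sum, Fintype.piFinset_univ]

lemma sum_single {ι : Type} [Fintype ι] [DecidableEq ι] {m : ι → ℕ}
    (w : ∀ j, Fin (m j) → ℝ) (i : ι) (a : Fin (m i)) :
    ∑ y : ∀ j, Fin (m j), (if y i = a then ∏ j, w j (y j) else 0)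
      = w i a * ∏ j ∈ Finset.univ.erase i, ∑ b, w j b := by
  have key : ∀ y : ∀ j, Fin (m j),
      (if y i = a then ∏ j, w j (y j) else 0)
        = ∏ j, Function.update w i (fun b => if b = a then w i b else 0) j (y j) := by
    intro y
    by_cases h : y i = a
    · rw [if_pos h]
      apply Finset.prod_congr rfl
      intro j _
      by_cases hj : j = i
      · subst hj; simp [h]
      · simp [Function.update_of_ne hj]
    · rw [if_neg h]
      symm
      apply Finset.prod_eq_zero (Finset.mem_univ i)
      simp [h]
  simp_rw [key]
  rw [sum_prod_pi]
  rw [← Finset.mul_prod_erase Finset.univ _ (Finset.mem_univ i)]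
  congr 1
  · simp
  · apply Finset.prod_congr rfl
    intro j hj
    rw [Function.update_of_ne (Finset.ne_of_mem_erase hj)]

lemma marg_prod {n : ℕ} {d : Fin n → ℕ} (v : ∀ i, Fin (d i) → ℝ) (σ : Finset (Fin n))
    (y : ∀ i : σ, Fin (d i)) :
    marg (fun x => ∏ i, v i (x i)) σ y
      = ∏ i, (if h : i ∈ σ then v i (y ⟨i, h⟩) else ∑ b, v i b) := by
  unfold marg
  have key : ∀ x : ∀ i, Fin (d i),
      (if (∀ i : σ, x i = y i) then ∏ i, v i (x i) else 0)
        = ∏ i, (if h : i ∈ σ then (if x i = y ⟨i, h⟩ then v i (x i) else 0) else v i (x i)) := by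
    intro x
    by_cases h : ∀ i : σ, x i = y i
    · rw [if_pos h]
      apply Finset.prod_congr rfl
      intro j _
      by_cases hj : j ∈ σ
      · rw [dif_pos hj, if_pos (h ⟨j, hj⟩)]
      · rw [dif_neg hj]
    · rw [if_neg h]
      push_neg at h
      obtain ⟨i, hi⟩ := h
      symm
      apply Finset.prod_eq_zero (Finset.mem_univ (i : Fin n))
      rw [dif_pos i.2, if_neg]
      exact fun hc => hi hc
  simp_rw [key]
  rw [sum_prod_pi (fun j b => if h : j ∈ σ then (if b = y ⟨j, h⟩ then v j b else 0) else v j b)]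
  apply Finset.prod_congr rfl
  intro j _
  by_cases hj : j ∈ σ
  · simp only [dif_pos hj]
    simp
  · simp only [dif_neg hj]

lemma marg_add {n : ℕ} {d : Fin n → ℕ} (P R : (∀ i, Fin (d i)) → ℝ) (σ : Finset (Fin n))
    (y : ∀ i : σ, Fin (d i)) :
    marg (fun x => P x + R x) σ y = marg P σ y + marg R σ y := by
  unfold marg
  rw [← Finset.sum_add_distrib]
  apply Finset.sum_congr rfl
  intro x _
  split <;> simp

lemma marg_sub {n : ℕ} {d : Fin n → ℕ} (P R : (∀ i, Fin (d i)) → ℝ) (σ : Finset (Fin n))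
    (y : ∀ i : σ, Fin (d i)) :
    marg (fun x => P x - R x) σ y = marg P σ y - marg R σ y := by
  unfold marg
  rw [← Finset.sum_sub_distrib]
  apply Finset.sum_congr rfl
  intro x _
  split <;> simp

lemma sum_marg {n : ℕ} {d : Fin n → ℕ} (P : (∀ i, Fin (d i)) → ℝ) (σ : Finset (Fin n))
    (c : (∀ j : σ, Fin (d j)) → Prop) [DecidablePred c] :
    (∑ y, if c y then marg P σ y else 0)
      = ∑ x : ∀ i, Fin (d i), if c (fun j => x j) then P x else 0 := by
  unfold marg
  have key : ∀ y, (if c y then ∑ x : ∀ i, Fin (d i), (if ∀ j : σ, x j = y j then P x else 0) else 0)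
      = ∑ x : ∀ i, Fin (d i), if c y ∧ ∀ j : σ, x j = y j then P x else 0 := by
    intro y
    by_cases h : c y
    · rw [if_pos h]
      apply Finset.sum_congr rfl
      intro x _
      simp [h]
    · rw [if_neg h]
      symm
      apply Finset.sum_eq_zero
      intro x _
      rw [if_neg]
      tauto
  simp_rw [key]
  rw [Finset.sum_comm]
  apply Finset.sum_congr rfl
  intro x _
  rw [Finset.sum_eq_single (fun j : σ => x j)]
  · simp
  · intro y _ hy
    rw [if_neg]
    rintro ⟨-, h2⟩
    exact hy (funext fun j => (h2 j).symm)
  · intro h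
    exact absurd (Finset.mem_univ _) h

/-- For a simplicial complex `S` and a tensor `P` of format `d` whose
entries sum to `1`, the tensor `P` lies in the marginal independence model `M_S`
(all marginals `P_σ`, `σ ∈ S`, have rank at most one) if and only if `P` is the sum of
a rank-one tensor and a tensor all of whose marginals `L_σ`, `σ ∈ S`, vanish. -/
theorem model_iff_segre_add_linear (n : ℕ) (hn : 1 ≤ n) (d : Fin n → ℕ)
    (hd : ∀ i, 1 ≤ d i) (S : Set (Finset (Fin n)))
    (hdown : ∀ σ ∈ S, ∀ τ ⊆ σ, τ ∈ S) (hsingle : ∀ i : Fin n, {i} ∈ S)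
    (P : (∀ i, Fin (d i)) → ℝ) (hsum : ∑ x, P x = 1) :
    (∀ σ ∈ S, RankOneOn (marg P σ)) ↔
      ∃ R L : (∀ i, Fin (d i)) → ℝ,
        RankOneOn R ∧ (∀ σ ∈ S, marg L σ = 0) ∧ P = R + L := by
  classical
  constructor
  · intro hM
    set v : ∀ i, Fin (d i) → ℝ :=
      fun i a => ∑ x : ∀ i, Fin (d i), if x i = a then P x else 0 with hv
    have hv1 : ∀ i, ∑ b, v i b = 1 := by
      intro i
      rw [hv]
      rw [Finset.sum_comm]
      calc ∑ x : ∀ i, Fin (d i), ∑ b, (if x i = b then P x else 0)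
          = ∑ x : ∀ i, Fin (d i), P x := by
            apply Finset.sum_congr rfl; intro x _; simp
        _ = 1 := hsum
    set R : (∀ i, Fin (d i)) → ℝ := fun x => ∏ i, v i (x i) with hR
    refine ⟨R, fun x => P x - R x, ⟨v, fun y => rfl⟩, ?_, by funext x; simp⟩
    intro σ hσ
    funext y
    have hmargR : marg R σ y = ∏ i : σ, v i (y i) := by
      rw [hR, marg_prod]
      have h1 : ∀ i ∈ Finset.univ, (if h : i ∈ σ then v i (y ⟨i, h⟩) else ∑ b, v i b)
          = (if h : i ∈ σ then v i (y ⟨i, h⟩) else 1) := by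
        intro i _; by_cases h : i ∈ σ <;> simp [h, hv1]
      rw [Finset.prod_congr rfl h1]
      rw [← Finset.prod_subset (Finset.subset_univ σ) (fun i _ hi => dif_neg hi)]
      rw [← Finset.prod_attach σ (fun i => if h : i ∈ σ then v i (y ⟨i, h⟩) else 1)]
      rw [Finset.univ_eq_attach]
      apply Finset.prod_congr rfl
      intro i _
      rw [dif_pos i.2]
    obtain ⟨w, hw⟩ := hM σ hσ
    set s : σ → ℝ := fun j => ∑ b, w j b with hs
    have hsmarg : (∑ y, marg P σ y) = ∑ x : ∀ i, Fin (d i), P x := by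
      have := sum_marg P σ (fun _ => True)
      simpa using this
    have hprod : ∏ j : σ, s j = 1 := by
      rw [hs, ← sum_prod_pi w]
      calc ∑ z : ∀ j : σ, Fin (d j), ∏ j, w j (z j)
          = ∑ z, marg P σ z := by
            apply Finset.sum_congr rfl; intro z _; rw [hw]
        _ = ∑ x : ∀ i, Fin (d i), P x := hsmarg
        _ = 1 := hsum
    have hvw : ∀ (i : σ) (a : Fin (d i)),
        v i a = w i a * ∏ j ∈ Finset.univ.erase i, s j := by
      intro i a
      have h1 : v i a = ∑ z : ∀ j : σ, Fin (d j), if z i = a then marg P σ z else 0 := by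
        rw [sum_marg P σ (fun z => z i = a)]
      rw [h1]
      calc ∑ z : ∀ j : σ, Fin (d j), (if z i = a then marg P σ z else 0)
          = ∑ z : ∀ j : σ, Fin (d j), (if z i = a then ∏ j, w j (z j) else 0) := by
            apply Finset.sum_congr rfl; intro z _; rw [hw]
        _ = w i a * ∏ j ∈ Finset.univ.erase i, s j := sum_single w i a
    have herase : ∀ i : σ, ∏ j ∈ Finset.univ.erase i, s j = (s i)⁻¹ := by
      intro i
      have h := Finset.mul_prod_erase Finset.univ s (Finset.mem_univ i)
      rw [hprod] at h
      exact eq_inv_of_mul_eq_one_right (by linarith [h])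
    have hmargP : marg P σ y = ∏ i : σ, v i (y i) := by
      have hterm : ∀ i ∈ Finset.univ, v (i : σ) (y i) = w i (y i) * (s i)⁻¹ := by
        intro i _; rw [hvw i (y i), herase i]
      rw [Finset.prod_congr rfl hterm, Finset.prod_mul_distrib,
        Finset.prod_inv_distrib, hprod, inv_one, mul_one, hw]
    rw [marg_sub, hmargP, hmargR]
    simp
  · rintro ⟨R, L, ⟨v, hvR⟩, hL, rfl⟩
    intro σ hσ
    have hRL : ∀ y, marg (R + L) σ y = marg R σ y := by
      intro y
      have h := marg_add R L σ y
      have h2 : marg (R + L) σ y = marg (fun x => R x + L x) σ y := rfl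
      rw [h2, h, hL σ hσ]
      simp
    have hRv : R = fun x => ∏ i, v i (x i) := funext hvR
    by_cases hσe : σ = ∅
    · subst hσe
      haveI : IsEmpty { x // x ∈ (∅ : Finset (Fin n)) } := by
        constructor; rintro ⟨i, hi⟩; simp at hi
      refine ⟨fun i => isEmptyElim i, ?_⟩
      intro y
      rw [Finset.univ_eq_empty, Finset.prod_empty]
      show marg (R + L) ∅ y = 1
      unfold marg
      calc (∑ x : ∀ i, Fin (d i),
            if ∀ i : (∅ : Finset (Fin n)), x i = y i then (R + L) x else 0)
          = ∑ x : ∀ i, Fin (d i), (R + L) x := by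
            apply Finset.sum_congr rfl
            intro x _
            rw [if_pos]
            intro i
            exact isEmptyElim i
        _ = 1 := hsum
    · obtain ⟨i0, hi0⟩ := Finset.nonempty_iff_ne_empty.mpr hσe
      set c : ℝ := ∏ i ∈ σᶜ, ∑ b, v i b with hc
      refine ⟨fun i b => if i = (⟨i0, hi0⟩ : σ) then c * v i b else v i b, ?_⟩
      intro y
      rw [hRL y, hRv, marg_prod]
      rw [← Finset.prod_mul_prod_compl σ]
      have h2 : (∏ i ∈ σᶜ, if h : i ∈ σ then v i (y ⟨i, h⟩) else ∑ b, v i b) = c := by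
        rw [hc]
        apply Finset.prod_congr rfl
        intro i hi
        rw [dif_neg (Finset.mem_compl.mp hi)]
      have h3 : (∏ i ∈ σ, if h : i ∈ σ then v i (y ⟨i, h⟩) else ∑ b, v i b)
          = ∏ i : σ, v i (y i) := by
        rw [← Finset.prod_attach σ (fun i => if h : i ∈ σ then v i (y ⟨i, h⟩) else ∑ b, v i b)]
        rw [Finset.univ_eq_attach]
        apply Finset.prod_congr rfl
        intro i _
        rw [dif_pos i.2]
      have h4 : (∏ i : σ, if i = (⟨i0, hi0⟩ : σ) then c * v i (y i) else v i (y i))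
          = c * ∏ i : σ, v i (y i) := by
        rw [← Finset.mul_prod_erase Finset.univ _ (Finset.mem_univ (⟨i0, hi0⟩ : σ))]
        rw [if_pos rfl, mul_assoc]
        congr 1
        rw [← Finset.mul_prod_erase Finset.univ (fun i : σ => v i (y i))
          (Finset.mem_univ (⟨i0, hi0⟩ : σ))]
        congr 1
        apply Finset.prod_congr rfl
        intro j hj
        rw [if_neg (Finset.mem_erase.mp hj).1]
      rw [h2, h3, h4, mul_comm]
end

section
/- If T is a tensor of format d whose entries sum to 1 and which has rank at most one, then T equals the outer product of its one-dimensional marginalizations: T(x) = ∏ i, T_{{i}}(x i) for every index x. -/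
/-- The one-dimensional marginalization of a tensor `P` to the singleton `{i}`:
the value at `a : Fin (d i)` is the sum of `P x` over all `x` with `x i = a`. -/
def marg1 {n : ℕ} {d : Fin n → ℕ} (P : (∀ i, Fin (d i)) → ℝ) (i : Fin n) :
    Fin (d i) → ℝ :=
  fun a => ∑ x : ∀ j, Fin (d j), if x i = a then P x else 0

/-- If a tensor `T` of format `d` has entries summing to `1` and has rank
at most one, then `T` equals the outer product of its one-dimensional marginalizations. -/
theorem rankOne_eq_prod_marg1 (n : ℕ) (hn : 1 ≤ n) (d : Fin n → ℕ)
    (hd : ∀ i, 1 ≤ d i) (T : (∀ i, Fin (d i)) → ℝ)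
    (hsum : ∑ x, T x = 1) (hrk : RankOneOn T) :
    ∀ x, T x = ∏ i, marg1 T i (x i) := by
  classical
  obtain ⟨v, hv⟩ := hrk
  set c : Fin n → ℝ := fun i => ∑ a, v i a with hc
  have hprodc : ∏ i, c i = 1 := by
    rw [← hsum, Fintype.prod_sum]
    exact Finset.sum_congr rfl fun x _ => (hv x).symm
  have hmarg : ∀ i a, marg1 T i a = v i a * ∏ j ∈ Finset.univ.erase i, c j := by
    intro i a
    set f : ∀ j, Fin (d j) → ℝ :=
      fun j b => if h : j = i then (if h ▸ b = a then v j b else 0) else v j b with hf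
    have key : ∀ x : ∀ j, Fin (d j),
        (if x i = a then T x else 0) = ∏ j, f j (x j) := by
      intro x
      by_cases hx : x i = a
      · rw [if_pos hx, hv, ← Finset.prod_erase_mul _ _ (Finset.mem_univ i),
            ← Finset.prod_erase_mul _ _ (Finset.mem_univ i)]
        congr 1
        · exact Finset.prod_congr rfl fun j hj => by
            simp [hf, dif_neg (Finset.ne_of_mem_erase hj)]
        · simp [hf, hx]
      · rw [if_neg hx]
        symm
        rw [← Finset.prod_erase_mul _ _ (Finset.mem_univ i)]
        simp [hf, hx]
    calc marg1 T i a = ∑ x : ∀ j, Fin (d j), ∏ j, f j (x j) :=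
          Finset.sum_congr rfl fun x _ => key x
      _ = ∏ j, ∑ b, f j b := (Fintype.prod_sum f).symm
      _ = (∏ j ∈ Finset.univ.erase i, ∑ b, f j b) * ∑ b, f i b :=
          (Finset.prod_erase_mul _ _ (Finset.mem_univ i)).symm
      _ = v i a * ∏ j ∈ Finset.univ.erase i, c j := by
          rw [mul_comm]
          congr 1
          · simp [hf]
          · exact Finset.prod_congr rfl fun j hj => by
              simp [hf, hc, dif_neg (Finset.ne_of_mem_erase hj)]
  have hcne : ∀ i, c i ≠ 0 := by
    intro i h
    have := Finset.prod_eq_zero (Finset.mem_univ i) h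
    rw [hprodc] at this
    exact one_ne_zero this
  intro x
  rw [Finset.prod_congr rfl fun i _ => hmarg i (x i), Finset.prod_mul_distrib, ← hv]
  have hinv : ∀ i : Fin n, ∏ j ∈ Finset.univ.erase i, c j = (c i)⁻¹ := by
    intro i
    have h1 := Finset.prod_erase_mul Finset.univ c (Finset.mem_univ i)
    rw [hprodc] at h1
    exact eq_inv_of_mul_eq_one_left h1
  rw [Finset.prod_congr rfl fun i _ => hinv i, Finset.prod_inv_distrib, hprodc]
  simp
end

section
/- Let Σ be a simplicial complex on Fin n and P a tensor of format d. Then P_σ = 0 for every σ ∈ Σ if and only if every relevant Möbius coordinate of P vanishes, i.e. φ(P)(x) = 0 for every index x with supp(x) ∈ Σ. -/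
/-- Marginal with a full index: sum of `P z` over `z` agreeing with `x` on `σ`. -/
def margF {n : ℕ} {d : Fin n → ℕ} (P : (∀ i, Fin (d i)) → ℝ) (σ : Finset (Fin n))
    (x : ∀ i, Fin (d i)) : ℝ :=
  ∑ z : ∀ i, Fin (d i), if ∀ i ∈ σ, z i = x i then P z else 0

lemma margF_eq_marg {n : ℕ} {d : Fin n → ℕ} (P : (∀ i, Fin (d i)) → ℝ)
    (σ : Finset (Fin n)) (x : ∀ i, Fin (d i)) :
    margF P σ x = marg P σ (fun i : σ => x i) := by
  unfold margF marg
  refine Finset.sum_congr rfl fun z _ => if_congr ?_ rfl rfl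
  exact ⟨fun h i => h i i.2, fun h i hi => h ⟨i, hi⟩⟩

lemma margF_congr {n : ℕ} {d : Fin n → ℕ} (P : (∀ i, Fin (d i)) → ℝ)
    {σ : Finset (Fin n)} {x x' : ∀ i, Fin (d i)} (h : ∀ i ∈ σ, x i = x' i) :
    margF P σ x = margF P σ x' := by
  unfold margF
  refine Finset.sum_congr rfl fun z _ => if_congr ?_ rfl rfl
  exact ⟨fun hz i hi => (hz i hi).trans (h i hi),
    fun hz i hi => (hz i hi).trans (h i hi).symm⟩

lemma mobius_eq_margF {n : ℕ} {d : Fin n → ℕ} (P : (∀ i, Fin (d i)) → ℝ)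
    (x : ∀ i, Fin (d i)) : mobius d P x = margF P (suppIdx x) x := by
  unfold mobius margF
  refine Finset.sum_congr rfl fun z _ => if_congr ?_ rfl rfl
  simp [suppIdx]

lemma sum_margF_update {n : ℕ} {d : Fin n → ℕ} (P : (∀ i, Fin (d i)) → ℝ)
    (σ : Finset (Fin n)) (x : ∀ i, Fin (d i)) {i0 : Fin n} (hi0 : i0 ∈ σ) :
    ∑ v : Fin (d i0), margF P σ (Function.update x i0 v) = margF P (σ.erase i0) x := by
  unfold margF
  rw [Finset.sum_comm]
  refine Finset.sum_congr rfl fun z _ => ?_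
  have key : ∀ v : Fin (d i0),
      (∀ i ∈ σ, z i = Function.update x i0 v i) ↔
        (v = z i0 ∧ ∀ i ∈ σ.erase i0, z i = x i) := by
    intro v
    constructor
    · intro h
      refine ⟨?_, ?_⟩
      · have := h i0 hi0
        rw [Function.update_self] at this
        exact this.symm
      · intro i hi
        rcases Finset.mem_erase.mp hi with ⟨hne, hiσ⟩
        have := h i hiσ
        rwa [Function.update_of_ne hne] at this
    · rintro ⟨hv, h⟩ i hi
      by_cases hne : i = i0
      · subst hne; rw [Function.update_self]; exact hv.symm
      · rw [Function.update_of_ne hne]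
        exact h i (Finset.mem_erase.mpr ⟨hne, hi⟩)
  rw [Finset.sum_congr rfl fun v _ => if_congr (key v) rfl rfl]
  by_cases hA : ∀ i ∈ σ.erase i0, z i = x i
  · have hc : ∀ v : Fin (d i0),
        ((v = z i0 ∧ ∀ i ∈ σ.erase i0, z i = x i) ↔ v = z i0) :=
      fun v => ⟨fun h => h.1, fun h => ⟨h, hA⟩⟩
    rw [Finset.sum_congr rfl fun v _ => if_congr (hc v) rfl rfl,
      Finset.sum_ite_eq' Finset.univ (z i0) fun _ => P z, if_pos (Finset.mem_univ _),
      if_pos hA]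
  · rw [Finset.sum_congr rfl fun v _ => if_neg (fun hc => hA hc.2),
      Finset.sum_const_zero, if_neg hA]

lemma margF_zero_of_mobius {n : ℕ} {d : Fin n → ℕ} (hd : ∀ i, 1 ≤ d i)
    (S : Set (Finset (Fin n))) (hdown : ∀ σ ∈ S, ∀ τ ⊆ σ, τ ∈ S)
    (P : (∀ i, Fin (d i)) → ℝ)
    (h : ∀ x : ∀ i, Fin (d i), suppIdx x ∈ S → mobius d P x = 0) :
    ∀ k : ℕ, ∀ σ ∈ S, ∀ x : ∀ i, Fin (d i),
      (σ.filter fun i => (x i : ℕ) = d i - 1).card ≤ k → margF P σ x = 0 := by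
  intro k
  induction k with
  | zero =>
    intro σ hσ x hcard
    have hbad : ∀ i ∈ σ, (x i : ℕ) ≠ d i - 1 := by
      intro i hi hxi
      have hm : i ∈ σ.filter fun i => (x i : ℕ) = d i - 1 :=
        Finset.mem_filter.mpr ⟨hi, hxi⟩
      have := Finset.card_pos.mpr ⟨i, hm⟩
      omega
    set x' : ∀ i, Fin (d i) :=
      fun i => if hi : i ∈ σ then x i else ⟨d i - 1, by have := hd i; omega⟩ with hx'
    have hxx' : ∀ i ∈ σ, x i = x' i := by
      intro i hi; simp [hx', hi]
    have hsupp : suppIdx x' = σ := by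
      ext i
      simp only [suppIdx, Finset.mem_filter, Finset.mem_univ, true_and]
      by_cases hi : i ∈ σ
      · simp [hx', hi, hbad i hi]
      · simp [hx', hi]
    rw [margF_congr P hxx', ← hsupp, ← mobius_eq_margF]
    exact h x' (hsupp ▸ hσ)
  | succ k IH =>
    intro σ hσ x hcard
    by_cases hk : (σ.filter fun i => (x i : ℕ) = d i - 1).card ≤ k
    · exact IH σ hσ x hk
    · have hpos : 0 < (σ.filter fun i => (x i : ℕ) = d i - 1).card := by omega
      obtain ⟨i0, hi0⟩ := Finset.card_pos.mp hpos
      rcases Finset.mem_filter.mp hi0 with ⟨hi0σ, hi0last⟩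
      have hcard' : ((σ.filter fun i => (x i : ℕ) = d i - 1).erase i0).card ≤ k := by
        rw [Finset.card_erase_of_mem hi0]; omega
      have h1 : margF P (σ.erase i0) x = 0 := by
        refine IH _ (hdown σ hσ _ (Finset.erase_subset _ _)) x ?_
        have : (σ.erase i0).filter (fun i => (x i : ℕ) = d i - 1)
            = (σ.filter fun i => (x i : ℕ) = d i - 1).erase i0 := by
          ext i
          simp only [Finset.mem_filter, Finset.mem_erase]
          tauto
        rw [this]; exact hcard'
      have h2 : ∀ v : Fin (d i0), v ≠ x i0 →
          margF P σ (Function.update x i0 v) = 0 := by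
        intro v hv
        refine IH σ hσ _ ?_
        have hvle : (v : ℕ) ≠ d i0 - 1 := by
          intro hvval
          apply hv
          apply Fin.ext
          rw [hvval, hi0last]
        have hsub : (σ.filter fun i => ((Function.update x i0 v) i : ℕ) = d i - 1)
            ⊆ (σ.filter fun i => (x i : ℕ) = d i - 1).erase i0 := by
          intro i hi
          rcases Finset.mem_filter.mp hi with ⟨hiσ, hival⟩
          by_cases hne : i = i0
          · subst hne
            rw [Function.update_self] at hival
            exact absurd hival hvle
          · rw [Function.update_of_ne hne] at hival
            exact Finset.mem_erase.mpr ⟨hne, Finset.mem_filter.mpr ⟨hiσ, hival⟩⟩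
        exact le_trans (Finset.card_le_card hsub) hcard'
      have hsum := sum_margF_update P σ x hi0σ
      have hself : ∑ v : Fin (d i0), margF P σ (Function.update x i0 v)
          = margF P σ x := by
        rw [Finset.sum_eq_single (x i0)]
        · rw [Function.update_eq_self]
        · intro v _ hv; exact h2 v hv
        · intro habs; exact absurd (Finset.mem_univ _) habs
      rw [hself, h1] at hsum
      exact hsum

/-- For a simplicial complex `S` and a tensor `P`, all marginals `P_σ` with
`σ ∈ S` vanish if and only if all relevant Möbius coordinates of `P` vanish, i.e.
`φ(P)(x) = 0` for every index `x` whose support is a face of `S`. -/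
theorem marg_zero_iff_relevant_mobius_zero (n : ℕ) (hn : 1 ≤ n) (d : Fin n → ℕ)
    (hd : ∀ i, 1 ≤ d i) (S : Set (Finset (Fin n)))
    (hdown : ∀ σ ∈ S, ∀ τ ⊆ σ, τ ∈ S) (hsingle : ∀ i : Fin n, {i} ∈ S)
    (P : (∀ i, Fin (d i)) → ℝ) :
    (∀ σ ∈ S, marg P σ = 0) ↔
      (∀ x : ∀ i, Fin (d i), suppIdx x ∈ S → mobius d P x = 0) := by
  constructor
  · intro h x hx
    rw [mobius_eq_margF, margF_eq_marg, h (suppIdx x) hx]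
    rfl
  · intro h σ hσ
    funext y
    have hext : marg P σ y = margF P σ
        (fun i => if hi : i ∈ σ then y ⟨i, hi⟩ else ⟨0, hd i⟩) := by
      unfold marg margF
      refine Finset.sum_congr rfl fun z _ => if_congr ?_ rfl rfl
      constructor
      · intro hz i hi
        beta_reduce
        rw [dif_pos hi]
        exact hz ⟨i, hi⟩
      · intro hz i
        have := hz i i.2
        beta_reduce at this
        rw [dif_pos i.2] at this
        exact this
    rw [hext, margF_zero_of_mobius hd S hdown P h _ σ hσ _ le_rfl]
    rfl
end

section
/- Let Σ be a simplicial complex on Fin n. The linear subspace L_Σ = {P : P_σ = 0 for all σ ∈ Σ} of the space of tensors of format d has dimension (finrank over ℝ) equal to ∑_{τ ⊆ Fin n, τ ∉ Σ} ∏_{j ∈ τ} (d j − 1), the sum running over all finsets τ of Fin n that are not faces of Σ. -/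
open scoped Classical

namespace MargAux

variable {n : ℕ} {d : Fin n → ℕ}

/-- The support of a point: coordinates where it is nonzero. -/
def supp (x : ∀ i, Fin (d i)) : Finset (Fin n) :=
  Finset.univ.filter (fun i => (x i).val ≠ 0)

lemma mem_supp {x : ∀ i, Fin (d i)} {i : Fin n} : i ∈ supp x ↔ (x i).val ≠ 0 := by
  simp [supp]

/-- The points distinct from `x` that agree with `x` on the support of `x`. -/
def fiber (x : ∀ i, Fin (d i)) : Finset (∀ i, Fin (d i)) :=
  (Finset.univ.erase x).filter (fun x' => ∀ i : supp x, x' i = x i)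

lemma marg_supp_eq (P : (∀ i, Fin (d i)) → ℝ) (x : ∀ i, Fin (d i)) :
    marg P (supp x) (fun i => x i) = P x + ∑ x' ∈ fiber x, P x' := by
  unfold marg fiber
  rw [Finset.sum_filter, ← Finset.add_sum_erase _ _ (Finset.mem_univ x), if_pos (fun _ => rfl)]

lemma supp_ssubset {x x' : ∀ i, Fin (d i)} (h : ∀ i : supp x, x' i = x i) (hne : x' ≠ x) :
    supp x ⊂ supp x' := by
  constructor
  · intro i hi
    rw [mem_supp] at hi ⊢
    rw [h ⟨i, mem_supp.2 hi⟩]; exact hi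
  · intro hsub
    apply hne
    funext j
    by_cases hj : j ∈ supp x
    · exact h ⟨j, hj⟩
    · have hj' : j ∉ supp x' := fun hc => hj (hsub hc)
      rw [mem_supp, not_not] at hj hj'
      exact Fin.ext (hj'.trans hj.symm)

lemma fiber_card_lt {x x' : ∀ i, Fin (d i)} (hx' : x' ∈ fiber x) :
    ((supp x')ᶜ).card < ((supp x)ᶜ).card := by
  simp only [fiber, Finset.mem_filter, Finset.mem_erase] at hx'
  have hss := supp_ssubset hx'.2 hx'.1.1
  rw [Finset.card_compl, Finset.card_compl]
  exact Nat.sub_lt_sub_left (lt_of_lt_of_le (Finset.card_lt_card hss) (Finset.card_le_univ _))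
    (Finset.card_lt_card hss)

/-- Build a tensor in `L_S` extending given values on the points with support not in `S`. -/
noncomputable def buildP (S : Set (Finset (Fin n))) (f : (∀ i, Fin (d i)) → ℝ)
    (x : ∀ i, Fin (d i)) : ℝ :=
  if supp x ∉ S then f x
  else - ∑ x' ∈ (fiber x).attach, buildP S f x'.1
termination_by ((supp x)ᶜ).card
decreasing_by exact fiber_card_lt x'.2

lemma buildP_of_not_mem {S : Set (Finset (Fin n))} {f : (∀ i, Fin (d i)) → ℝ}
    {x : ∀ i, Fin (d i)} (h : supp x ∉ S) : buildP S f x = f x := by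
  rw [buildP]; exact if_pos h

lemma buildP_of_mem {S : Set (Finset (Fin n))} {f : (∀ i, Fin (d i)) → ℝ}
    {x : ∀ i, Fin (d i)} (h : supp x ∈ S) :
    buildP S f x + ∑ x' ∈ fiber x, buildP S f x' = 0 := by
  conv_lhs => rw [buildP]
  rw [if_neg (not_not_intro h), ← Finset.sum_attach (fiber x) (fun x' => buildP S f x')]
  ring

lemma sum_marg_update (P : (∀ i, Fin (d i)) → ℝ) (σ : Finset (Fin n)) {i₀ : Fin n}
    (h₀ : i₀ ∈ σ) (x : ∀ i, Fin (d i)) :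
    ∑ a : Fin (d i₀), marg P σ (fun i => Function.update x i₀ a i) =
      marg P (σ.erase i₀) (fun i => x i) := by
  unfold marg
  rw [Finset.sum_comm]
  refine Finset.sum_congr rfl (fun x' _ => ?_)
  have key : ∀ a : Fin (d i₀),
      (∀ i : σ, x' i = Function.update x i₀ a i) ↔
        (x' i₀ = a ∧ ∀ i : (σ.erase i₀ : Finset (Fin n)), x' i = x i) := by
    intro a
    constructor
    · intro h
      refine ⟨(h ⟨i₀, h₀⟩).trans (Function.update_self _ _ _), fun i => ?_⟩
      have hne : (i : Fin n) ≠ i₀ := (Finset.mem_erase.1 i.2).1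
      exact (h ⟨i, (Finset.mem_erase.1 i.2).2⟩).trans (Function.update_of_ne hne _ _)
    · rintro ⟨ha, h⟩ ⟨i, hiσ⟩
      by_cases hi : i = i₀
      · subst hi; rw [Function.update_self]; exact ha
      · rw [Function.update_of_ne hi]; exact h ⟨i, Finset.mem_erase.2 ⟨hi, hiσ⟩⟩
  simp only [key, ite_and]
  rw [Finset.sum_ite_eq]
  simp

lemma marg_buildP_eq_zero {S : Set (Finset (Fin n))} (hd : ∀ i, 1 ≤ d i)
    (hdown : ∀ σ ∈ S, ∀ τ ⊆ σ, τ ∈ S) (f : (∀ i, Fin (d i)) → ℝ) :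
    ∀ σ ∈ S, ∀ x : ∀ i, Fin (d i), marg (buildP S f) σ (fun i => x i) = 0 := by
  set P := buildP S f with hP
  suffices H : ∀ k (σ : Finset (Fin n)), σ ∈ S → ∀ x : ∀ i, Fin (d i),
      (σ.filter (fun i => (x i).val = 0)).card = k → marg P σ (fun i => x i) = 0 by
    intro σ hσ x; exact H _ σ hσ x rfl
  intro k
  induction k using Nat.strong_induction_on with
  | _ k IH =>
  intro σ hσ x hk
  by_cases hzero : ∃ i₀ ∈ σ, (x i₀).val = 0
  · obtain ⟨i₀, hi₀, hxi₀⟩ := hzero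
    have hmem : i₀ ∈ σ.filter (fun i => (x i).val = 0) := Finset.mem_filter.2 ⟨hi₀, hxi₀⟩
    have hkpos : 1 ≤ k := hk ▸ Finset.card_pos.2 ⟨i₀, hmem⟩
    have herase : σ.erase i₀ ∈ S := hdown σ hσ _ (Finset.erase_subset _ _)
    have hcard : ((σ.erase i₀).filter (fun i => (x i).val = 0)).card = k - 1 := by
      rw [Finset.filter_erase, Finset.card_erase_of_mem hmem, hk]
    have hupdate : ∀ a : Fin (d i₀), a ≠ x i₀ →
        (σ.filter (fun i => ((Function.update x i₀ a) i).val = 0)).card = k - 1 := by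
      intro a ha
      have heq : σ.filter (fun i => ((Function.update x i₀ a) i).val = 0)
          = (σ.filter (fun i => (x i).val = 0)).erase i₀ := by
        ext j
        simp only [Finset.mem_filter, Finset.mem_erase]
        by_cases hj : j = i₀
        · subst hj
          simp only [Function.update_self]
          constructor
          · rintro ⟨-, h0⟩; exact absurd (Fin.ext (h0.trans hxi₀.symm)) ha
          · rintro ⟨h, -⟩; exact absurd rfl h
        · rw [Function.update_of_ne hj]; tauto
      rw [heq, Finset.card_erase_of_mem hmem, hk]
    have hsum := sum_marg_update P σ hi₀ x
    rw [← Finset.add_sum_erase _ _ (Finset.mem_univ (x i₀))] at hsum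
    rw [Function.update_eq_self] at hsum
    have hrest : ∀ a ∈ Finset.univ.erase (x i₀),
        marg P σ (fun i => Function.update x i₀ a i) = 0 := by
      intro a ha
      have ha' : a ≠ x i₀ := (Finset.mem_erase.1 ha).1
      exact IH (k - 1) (Nat.sub_lt hkpos one_pos) σ hσ _ (hupdate a ha')
    rw [Finset.sum_congr rfl hrest, Finset.sum_const_zero, add_zero] at hsum
    rw [hsum]
    exact IH (k - 1) (Nat.sub_lt hkpos one_pos) _ herase x hcard
  · push_neg at hzero
    set z : ∀ i, Fin (d i) := fun j => if h : j ∈ σ then x j else ⟨0, hd j⟩ with hz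
    have hres : (fun i : σ => x i) = (fun i : σ => z i) := by
      funext i
      simp only [hz, dif_pos i.2]
    have hsupp : supp z = σ := by
      ext j
      rw [mem_supp]
      by_cases h : j ∈ σ
      · simp only [hz, dif_pos h]
        exact ⟨fun _ => h, fun _ => hzero j h⟩
      · simp only [hz, dif_neg h]
        exact ⟨fun hc => absurd rfl hc, fun hc => absurd hc h⟩
    rw [hres, ← hsupp]
    rw [marg_supp_eq]
    exact buildP_of_mem (hsupp.symm ▸ hσ)

lemma eq_zero_of_marg_zero {S : Set (Finset (Fin n))} (P : (∀ i, Fin (d i)) → ℝ)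
    (hmarg : ∀ σ ∈ S, marg P σ = 0) (h0 : ∀ x, supp x ∉ S → P x = 0) : P = 0 := by
  suffices H : ∀ k (x : ∀ i, Fin (d i)), ((supp x)ᶜ).card = k → P x = 0 by
    funext x; exact H _ x rfl
  intro k
  induction k using Nat.strong_induction_on with
  | _ k IH =>
  intro x hk
  by_cases hs : supp x ∈ S
  · have hm := congrFun (hmarg _ hs) (fun i => x i)
    rw [marg_supp_eq] at hm
    have hrest : ∀ x' ∈ fiber x, P x' = 0 := fun x' hx' =>
      IH _ (hk ▸ fiber_card_lt hx') x' rfl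
    rw [Finset.sum_congr rfl hrest, Finset.sum_const_zero, add_zero] at hm
    simpa using hm
  · exact h0 x hs

lemma card_val_ne_zero {m : ℕ} (hm : 1 ≤ m) :
    Fintype.card {a : Fin m // a.val ≠ 0} = m - 1 := by
  have h1 : Fintype.card {a : Fin m // a.val = 0} = 1 := by
    rw [Fintype.card_eq_one_iff]
    exact ⟨⟨⟨0, hm⟩, rfl⟩, fun b => Subtype.ext (Fin.ext b.2)⟩
  have := Fintype.card_subtype_compl (p := fun a : Fin m => a.val = 0)
  simpa [h1] using this

noncomputable def suppEquiv (hd : ∀ i, 1 ≤ d i) (τ : Finset (Fin n)) :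
    {x : ∀ i, Fin (d i) // supp x = τ} ≃ (∀ i : τ, {a : Fin (d i.1) // a.val ≠ 0}) where
  toFun x := fun i => ⟨x.1 i, mem_supp.1 (x.2.symm ▸ i.2)⟩
  invFun g := ⟨fun j => if h : j ∈ τ then (g ⟨j, h⟩).1 else ⟨0, hd j⟩, by
    ext j
    rw [mem_supp]
    by_cases h : j ∈ τ
    · simp only [dif_pos h]
      exact ⟨fun _ => h, fun _ => (g ⟨j, h⟩).2⟩
    · simp only [dif_neg h]
      exact ⟨fun hc => absurd rfl hc, fun hc => absurd hc h⟩⟩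
  left_inv x := by
    apply Subtype.ext
    funext j
    dsimp only
    by_cases h : j ∈ τ
    · exact dif_pos h
    · rw [dif_neg h]
      have : ¬(x.1 j).val ≠ 0 := fun hc => h (x.2 ▸ mem_supp.2 hc)
      rw [not_not] at this
      exact (Fin.ext this).symm
  right_inv g := by
    funext i
    apply Subtype.ext
    show (if h : (i : Fin n) ∈ τ then (g ⟨i.1, h⟩).1 else _) = (g i).1
    rw [dif_pos i.2]

lemma card_supp_eq (hd : ∀ i, 1 ≤ d i) (τ : Finset (Fin n)) :
    Fintype.card {x : ∀ i, Fin (d i) // supp x = τ} = ∏ j ∈ τ, (d j - 1) := by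
  rw [Fintype.card_congr (suppEquiv hd τ), Fintype.card_pi]
  rw [← Finset.prod_coe_sort τ (fun j => d j - 1)]
  exact Finset.prod_congr rfl fun i _ => card_val_ne_zero (hd i.1)

lemma card_supp_not_mem (hd : ∀ i, 1 ≤ d i) (S : Set (Finset (Fin n))) :
    Fintype.card {x : ∀ i, Fin (d i) // supp x ∉ S} =
      ∑ τ ∈ Finset.univ.filter (fun τ : Finset (Fin n) => τ ∉ S), ∏ j ∈ τ, (d j - 1) := by
  rw [Fintype.card_subtype]
  rw [Finset.card_eq_sum_card_fiberwise (f := supp)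
    (t := Finset.univ.filter (fun τ : Finset (Fin n) => τ ∉ S))
    (fun x hx => by
      simpa using hx)]
  refine Finset.sum_congr rfl fun τ hτ => ?_
  have hτ' : τ ∉ S := (Finset.mem_filter.1 hτ).2
  have heq : (Finset.univ.filter (fun x : ∀ i, Fin (d i) => supp x ∉ S)).filter
      (fun x => supp x = τ) = Finset.univ.filter (fun x : ∀ i, Fin (d i) => supp x = τ) := by
    ext x
    simp only [Finset.mem_filter, Finset.mem_univ, true_and]
    exact ⟨fun h => h.2, fun h => ⟨h ▸ hτ', h⟩⟩
  rw [heq, ← Fintype.card_subtype]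
  exact card_supp_eq hd τ

end MargAux

/-- For a simplicial complex `S`, the linear subspace
`L_S = {P : P_σ = 0 for all σ ∈ S}` of the space of tensors of format `d` has dimension
`∑_{τ ∉ S} ∏_{j ∈ τ} (d j - 1)`, the sum over all finsets `τ ⊆ Fin n` that are not
faces of `S`. -/
theorem finrank_margZero_subspace (n : ℕ) (hn : 1 ≤ n) (d : Fin n → ℕ)
    (hd : ∀ i, 1 ≤ d i) (S : Set (Finset (Fin n)))
    (hdown : ∀ σ ∈ S, ∀ τ ⊆ σ, τ ∈ S) (hsingle : ∀ i : Fin n, {i} ∈ S)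
    (LS : Submodule ℝ ((∀ i, Fin (d i)) → ℝ))
    (hLS : ∀ P, P ∈ LS ↔ ∀ σ ∈ S, marg P σ = 0) :
    Module.finrank ℝ LS =
      ∑ τ ∈ Finset.univ.filter (fun τ : Finset (Fin n) => τ ∉ S),
        ∏ j ∈ τ, (d j - 1) := by
  classical
  let T := {x : ∀ i, Fin (d i) // MargAux.supp x ∉ S}
  let ev : LS →ₗ[ℝ] (T → ℝ) :=
    { toFun := fun P t => P.1 t.1
      map_add' := fun P Q => rfl
      map_smul' := fun c P => rfl }
  have hinj : Function.Injective ev := by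
    rw [injective_iff_map_eq_zero]
    intro P hP
    apply Subtype.ext
    show P.1 = 0
    apply MargAux.eq_zero_of_marg_zero P.1 ((hLS P.1).1 P.2)
    intro x hx
    exact congrFun hP ⟨x, hx⟩
  have hsurj : Function.Surjective ev := by
    intro f
    set g : (∀ i, Fin (d i)) → ℝ :=
      fun x => if h : MargAux.supp x ∉ S then f ⟨x, h⟩ else 0 with hg
    have hmem : MargAux.buildP S g ∈ LS := by
      rw [hLS]
      intro σ hσ
      funext y
      set x : ∀ i, Fin (d i) := fun j => if h : j ∈ σ then y ⟨j, h⟩ else ⟨0, hd j⟩ with hx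
      have hy : y = (fun i : σ => x i) := by
        funext i
        simp only [hx, dif_pos i.2]
      rw [hy]
      show marg (MargAux.buildP S g) σ (fun i : σ => x i) = 0
      exact MargAux.marg_buildP_eq_zero hd hdown g σ hσ x
    refine ⟨⟨MargAux.buildP S g, hmem⟩, ?_⟩
    funext t
    show MargAux.buildP S g t.1 = f t
    rw [MargAux.buildP_of_not_mem t.2, hg]
    simp only [dif_pos t.2]
    rfl
  have e : LS ≃ₗ[ℝ] (T → ℝ) := LinearEquiv.ofBijective ev ⟨hinj, hsurj⟩
  rw [e.finrank_eq, Module.finrank_fintype_fun_eq_card]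
  exact MargAux.card_supp_not_mem hd S
end

section
/- Let Σ be a simplicial complex on Fin n. Let R_Σ be the polynomial ring over ℝ with one variable q_x for each relevant index x (those with supp(x) ∈ Σ), and let ψ : R_Σ → ℝ[λ, θ^(i)_k : i ∈ Fin n, 0 ≤ k < d i − 1] be the ℝ-algebra homomorphism sending q_x to the monomial λ · ∏_{i ∈ supp(x)} θ^(i)_{x i}. Then the Krull dimension of the quotient ring R_Σ / ker ψ equals 1 + ∑_i (d i − 1). -/
/-- The ℝ-algebra homomorphism `ψ` from the polynomial ring `R_S` with one variable
`q_x` for each relevant index `x` (those with `supp(x) ∈ S`) to the polynomial ring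
`ℝ[λ, θ⁽ⁱ⁾_k : i : Fin n, 0 ≤ k < d i - 1]`, sending `q_x` to the monomial
`λ · ∏_{i ∈ supp(x)} θ⁽ⁱ⁾_{x i}`.  The variable `none` is `λ` and `some ⟨i, k⟩`
is `θ⁽ⁱ⁾_k`. -/
noncomputable def psi (n : ℕ) (d : Fin n → ℕ) (S : Set (Finset (Fin n))) :
    MvPolynomial {x : ∀ i, Fin (d i) // suppIdx x ∈ S} ℝ →ₐ[ℝ]
      MvPolynomial (Option (Σ i : Fin n, Fin (d i - 1))) ℝ :=
  MvPolynomial.aeval fun x =>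
    MvPolynomial.X none *
      ∏ i ∈ (suppIdx x.1).attach,
        MvPolynomial.X (some ⟨i.1, ⟨(x.1 i.1 : ℕ), by
          have h1 : ((x.1 i.1 : ℕ)) < d i.1 := (x.1 i.1).isLt
          have h2 : ((x.1 i.1 : ℕ)) ≠ d i.1 - 1 := (Finset.mem_filter.mp i.2).2
          omega⟩⟩)



open Polynomial in
/-- The Krull boundary ideal: `{r | ∃ m a, x^m * (r + a*x) ∈ J}`. -/
def clBnd {R : Type*} [CommRing R] (x : R) (J : Ideal R) : Ideal R where
  carrier := {r | ∃ (m : ℕ) (a : R), x ^ m * (r + a * x) ∈ J}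
  add_mem' := by
    rintro r s ⟨m, a, hm⟩ ⟨m', a', hm'⟩
    refine ⟨m + m', a + a', ?_⟩
    have h1 : x ^ m' * (x ^ m * (r + a * x)) ∈ J := Ideal.mul_mem_left _ _ hm
    have h2 : x ^ m * (x ^ m' * (s + a' * x)) ∈ J := Ideal.mul_mem_left _ _ hm'
    have h3 := Ideal.add_mem J h1 h2
    have : x ^ m' * (x ^ m * (r + a * x)) + x ^ m * (x ^ m' * (s + a' * x)) =
        x ^ (m + m') * (r + s + (a + a') * x) := by ring
    rwa [this] at h3
  zero_mem' := ⟨0, 0, by simpa using J.zero_mem⟩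
  smul_mem' := by
    rintro c r ⟨m, a, hm⟩
    refine ⟨m, c * a, ?_⟩
    have h1 := Ideal.mul_mem_left J c hm
    have : c * (x ^ m * (r + a * x)) = x ^ m * (c • r + c * a * x) := by
      simp [smul_eq_mul]; ring
    rwa [this] at h1

lemma mem_clBnd {R : Type*} [CommRing R] {x r : R} {J : Ideal R} :
    r ∈ clBnd x J ↔ ∃ (m : ℕ) (a : R), x ^ m * (r + a * x) ∈ J := Iff.rfl

lemma le_clBnd {R : Type*} [CommRing R] (x : R) (J : Ideal R) : J ≤ clBnd x J := by
  intro r hr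
  exact ⟨0, 0, by simpa using hr⟩

lemma self_mem_clBnd {R : Type*} [CommRing R] (x : R) (J : Ideal R) : x ∈ clBnd x J :=
  ⟨0, -1, by simpa using J.zero_mem⟩

open Polynomial in
lemma trailingCoeff_mem_clBnd {R : Type*} [CommRing R] {x : R} {J : Ideal R} {Q : R[X]}
    (h : Q.eval x ∈ J) : Q.coeff Q.natTrailingDegree ∈ clBnd x J := by
  by_cases hQ : Q = 0
  · simp [hQ, Ideal.zero_mem]
  obtain ⟨Q', hQ'⟩ : X ^ Q.natTrailingDegree ∣ Q := by
    rw [X_pow_dvd_iff]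
    exact fun d hd => coeff_eq_zero_of_lt_natTrailingDegree hd
  set m := Q.natTrailingDegree with hm
  refine ⟨m, (Q'.divX).eval x, ?_⟩
  have hc : Q.coeff m = Q'.coeff 0 := by
    rw [hQ']
    simpa using coeff_X_pow_mul Q' m 0
  have heval : Q.eval x = x ^ m * (Q'.coeff 0 + Q'.divX.eval x * x) := by
    conv_lhs => rw [hQ']
    conv_lhs => rw [← X_mul_divX_add Q']
    simp only [eval_mul, eval_add, eval_pow, eval_X, eval_C]
    ring
  rw [hc, ← heval]
  exact h

/-- Iterated Krull boundary ideal. -/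
def clIter {R : Type*} [CommRing R] : ∀ {k : ℕ}, (Fin k → R) → Ideal R → Ideal R
  | 0, _, J => J
  | (_+1), x, J => clIter (fun i => x i.succ) (clBnd (x 0) J)

open MvPolynomial in
/-- key lemma: nonzero algebraic relation gives collapse of the iterated boundary. -/
lemma one_mem_clIter {K : Type*} [Field K] {R : Type*} [CommRing R] [Algebra K R] :
    ∀ (k : ℕ) (p : MvPolynomial (Fin k) K), p ≠ 0 → ∀ (x : Fin k → R) (J : Ideal R),
      MvPolynomial.aeval x p ∈ J → (1 : R) ∈ clIter x J := by
  intro k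
  induction k with
  | zero =>
    intro p hp x J hmem
    rw [eq_C_of_isEmpty p] at hmem
    have hc : p.coeff 0 ≠ 0 := by
      intro h; apply hp
      conv_lhs => rw [eq_C_of_isEmpty p]
      rw [h, map_zero]
    have h2 : (aeval x) (C (p.coeff 0)) = algebraMap K R (p.coeff 0) := by simp
    rw [h2] at hmem
    have h1 := Ideal.mul_mem_left J (algebraMap K R (p.coeff 0)⁻¹) hmem
    rw [← map_mul, inv_mul_cancel₀ hc, map_one] at h1
    exact h1
  | succ k ih =>
    intro p hp x J hmem
    set f := (MvPolynomial.aeval (fun i : Fin k => x i.succ) : MvPolynomial (Fin k) K →ₐ[K] R)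
    set P := finSuccEquiv K k p with hP
    have hPne : P ≠ 0 := by
      intro h
      apply hp
      rwa [hP, map_eq_zero_iff _ (AlgEquiv.injective _)] at h
    -- the evaluation identity
    have key : MvPolynomial.aeval x p =
        Polynomial.eval (x 0) (Polynomial.map (f : MvPolynomial (Fin k) K →+* R) P) := by
      have : MvPolynomial.aeval x =
          (((Polynomial.aeval (x 0)).restrictScalars K).comp
            ((Polynomial.mapAlgHom f).comp (finSuccEquiv K k).toAlgHom)) := by
        apply MvPolynomial.algHom_ext
        intro i
        refine Fin.cases ?_ ?_ i
        · simp [finSuccEquiv_X_zero]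
        · intro j
          simp [finSuccEquiv_X_succ, f]
      rw [this]
      simp [Polynomial.mapAlgHom, Polynomial.aeval_def, Polynomial.eval, hP, -Polynomial.eval₂_id]
    set m := P.natTrailingDegree with hm
    set q := P.coeff m with hq
    have hqne : q ≠ 0 := Polynomial.coeff_natTrailingDegree_ne_zero.mpr hPne
    have hmem2 : f q ∈ clBnd (x 0) J := by
      by_cases h0 : f q = 0
      · rw [h0]; exact Ideal.zero_mem _
      · set Q := Polynomial.map (f : MvPolynomial (Fin k) K →+* R) P with hQdef
        have hQm : Q.coeff m = f q := by simp [hQdef, Polynomial.coeff_map, hq]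
        have hQne : Q ≠ 0 := fun h => h0 (by rw [← hQm, h, Polynomial.coeff_zero])
        have hQtd : Q.natTrailingDegree = m := by
          apply le_antisymm
          · exact Polynomial.natTrailingDegree_le_of_ne_zero (by rw [hQm]; exact h0)
          · apply Polynomial.le_natTrailingDegree hQne
            intro j hj
            rw [hQdef, Polynomial.coeff_map,
              Polynomial.coeff_eq_zero_of_lt_natTrailingDegree hj, map_zero]
        have := trailingCoeff_mem_clBnd (x := x 0) (J := J) (Q := Q) (by rw [← key]; exact hmem)
        rwa [hQtd, hQm] at this
    exact ih q hqne (fun i => x i.succ) (clBnd (x 0) J) hmem2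

lemma clIter_succ {R : Type*} [CommRing R] {k : ℕ} (x : Fin (k+1) → R) (J : Ideal R) :
    clIter x J = clIter (fun i => x i.succ) (clBnd (x 0) J) := rfl

lemma clIter_le_chain {R : Type*} [CommRing R] :
    ∀ (k : ℕ) (c : Fin (k+1) → Ideal R), (∀ i, (c i).IsPrime) →
      (∀ i : Fin k, c i.castSucc < c i.succ) →
      ∀ (x : Fin k → R), (∀ i, x i ∈ c i.succ) → (∀ i, x i ∉ c i.castSucc) →
      ∀ (J : Ideal R), J ≤ c 0 → clIter x J ≤ c (Fin.last k) := by
  intro k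
  induction k with
  | zero =>
    intro c _ _ x _ _ J hJ
    exact hJ
  | succ k ih =>
    intro c hprime hlt x hx1 hx2 J hJ
    have step : clBnd (x 0) J ≤ c 1 := by
      rintro r ⟨m, a, hm⟩
      have h0 : x 0 ^ m * (r + a * x 0) ∈ c 0 := hJ hm
      have hx0 : x 0 ∉ c 0 := by
        have := hx2 0
        simpa using this
      have hxp : x 0 ^ m ∉ c 0 := fun h => hx0 ((hprime 0).mem_of_pow_mem m h)
      have hmem : r + a * x 0 ∈ c 0 := ((hprime 0).mem_or_mem h0).resolve_left hxp
      have hlt0 : c 0 ≤ c 1 := by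
        have := (hlt 0).le
        simpa using this
      have h1 : r + a * x 0 ∈ c 1 := hlt0 hmem
      have h2 : a * x 0 ∈ c 1 := Ideal.mul_mem_left _ _ (by simpa using hx1 0)
      have := sub_mem h1 h2
      simpa using this
    rw [clIter_succ]
    have hres := ih (fun i => c i.succ) (fun i => hprime _)
      (fun i => by
        have := hlt i.succ
        rwa [← Fin.succ_castSucc] at this)
      (fun i => x i.succ)
      (fun i => hx1 i.succ)
      (fun i => by
        have := hx2 i.succ
        rwa [← Fin.succ_castSucc] at this)
      (clBnd (x 0) J) (by simpa using step)
    have hlast : (Fin.last k).succ = Fin.last (k+1) := Fin.succ_last k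
    rw [← hlast]
    exact hres

open MvPolynomial in
theorem ringKrullDim_le_of_forall_algdep (K : Type*) [Field K] {R : Type*} [CommRing R]
    [Algebra K R] (k : ℕ)
    (H : ∀ x : Fin (k+1) → R, ∃ p : MvPolynomial (Fin (k+1)) K,
      p ≠ 0 ∧ MvPolynomial.aeval x p = 0) :
    ringKrullDim R ≤ (k : WithBot (WithTop ℕ)) := by
  rw [ringKrullDim, Order.krullDim]
  apply iSup_le
  intro s
  have hlen : s.length ≤ k := by
    by_contra hcon
    push_neg at hcon
    have hk1 : k + 1 ≤ s.length := hcon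
    set c : Fin (k+2) → Ideal R := fun i => (s.toFun (Fin.castLE (by omega) i)).asIdeal with hc
    have hprime : ∀ i, (c i).IsPrime := fun i => (s.toFun _).isPrime
    have hltc : ∀ i : Fin (k+1), c i.castSucc < c i.succ := by
      intro i
      have : (Fin.castLE (by omega : k+2 ≤ s.length+1) i.castSucc) <
          (Fin.castLE (by omega) i.succ) := by
        simp [Fin.lt_def]
      exact s.strictMono this
    have hexists : ∀ i : Fin (k+1), ∃ r : R, r ∈ c i.succ ∧ r ∉ c i.castSucc := by
      intro i
      obtain ⟨r, hr1, hr2⟩ := SetLike.exists_of_lt (hltc i)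
      exact ⟨r, hr1, hr2⟩
    choose x hx1 hx2 using hexists
    obtain ⟨p, hp, hpe⟩ := H x
    have h1 : (1 : R) ∈ clIter x ⊥ :=
      one_mem_clIter (K := K) (k+1) p hp x ⊥ (by rw [hpe]; exact Ideal.zero_mem _)
    have h2 := clIter_le_chain (k+1) c hprime hltc x hx1 hx2 ⊥ bot_le h1
    exact (hprime (Fin.last (k+1))).ne_top (Ideal.eq_top_iff_one _ |>.mpr h2)
  exact Nat.cast_le.mpr hlen


open MvPolynomial

lemma totalDegree_aeval_le {K : Type*} [CommSemiring K] {τ σ : Type*}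
    (f : τ → MvPolynomial σ K) (D : ℕ) (hf : ∀ i, (f i).totalDegree ≤ D)
    (p : MvPolynomial τ K) : ((aeval f) p).totalDegree ≤ p.totalDegree * D := by
  conv_lhs => rw [p.as_sum]
  rw [map_sum]
  refine (totalDegree_finset_sum _ _).trans ?_
  apply Finset.sup_le
  intro v hv
  rw [aeval_monomial]
  refine (totalDegree_mul _ _).trans ?_
  have h1 : (algebraMap K (MvPolynomial σ K) (coeff v p)).totalDegree = 0 := by
    rw [algebraMap_eq, totalDegree_C]
  rw [h1, zero_add]
  rw [Finsupp.prod]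
  refine (totalDegree_finset_prod _ _).trans ?_
  have h2 : ∑ i ∈ v.support, (f i ^ v i).totalDegree ≤ ∑ i ∈ v.support, v i * D := by
    apply Finset.sum_le_sum
    intro i _
    exact (totalDegree_pow _ _).trans (Nat.mul_le_mul_left _ (hf i))
  refine h2.trans ?_
  rw [← Finset.sum_mul]
  apply Nat.mul_le_mul_right
  have := le_totalDegree (p := p) (s := v) hv
  simpa [Finsupp.sum] using this

open Module in
lemma exists_algdep_of_card {K : Type*} [Field K] {σ : Type*} [Fintype σ] [DecidableEq σ]
    (N : ℕ) (hN : Fintype.card σ = N) (f : Fin (N+1) → MvPolynomial σ K) :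
    ∃ p : MvPolynomial (Fin (N+1)) K, p ≠ 0 ∧ aeval f p = 0 := by
  classical
  set D := Finset.univ.sup (fun i => (f i).totalDegree) with hD
  have hfD : ∀ i, (f i).totalDegree ≤ D := fun i => Finset.le_sup (f := fun i => (f i).totalDegree) (Finset.mem_univ i)
  set M := D * (N+1) + 1 with hM
  set s := M ^ N with hs
  have hs1 : 1 ≤ s := Nat.one_le_pow _ _ (by omega)
  set t := (N+1) * s with ht
  set V := restrictTotalDegree (Fin (N+1)) K t with hV
  set W := restrictTotalDegree σ K (t*D) with hW
  have hVW : ∀ p : MvPolynomial (Fin (N+1)) K, p ∈ V → (aeval f) p ∈ W := by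
    intro p hp
    rw [hW, mem_restrictTotalDegree]
    refine (totalDegree_aeval_le f D hfD p).trans ?_
    exact Nat.mul_le_mul_right _ ((mem_restrictTotalDegree _ _ _).mp hp)
  set Φ : V →ₗ[K] W :=
    LinearMap.codRestrict W ((aeval f).toLinearMap.comp V.subtype)
      (fun v => hVW _ v.2) with hPhi
  by_cases hinj : Function.Injective Φ
  · exfalso
    -- index set and injections
    set A : Set ((Fin (N+1)) →₀ ℕ) := { n | (n.sum fun _ e => e) ≤ t } with hA
    set B : Set (σ →₀ ℕ) := { n | (n.sum fun _ e => e) ≤ t*D } with hB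
    -- Fintype on B via injection into σ → Fin (t*D+1)
    have hBsum : ∀ n : B, ∀ i, (n : σ →₀ ℕ) i ≤ t*D := by
      rintro ⟨n, hn⟩ i
      by_cases hi : i ∈ n.support
      · calc n i ≤ ∑ j ∈ n.support, n j := Finset.single_le_sum (fun _ _ => Nat.zero_le _) hi
          _ ≤ t*D := by simpa [Finsupp.sum, hB] using hn
      · simp [Finsupp.notMem_support_iff.mp hi]
    set jB : B → (σ → Fin (t*D+1)) := fun n i => ⟨(n : σ →₀ ℕ) i, Nat.lt_succ_of_le (hBsum n i)⟩
      with hjB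
    have hjBinj : Function.Injective jB := by
      intro a b hab
      ext i
      have := congrFun hab i
      exact congrArg Fin.val this
    have : Fintype B := Fintype.ofInjective jB hjBinj
    -- the linearly independent family in V
    set e : (Fin (N+1) → Fin (s+1)) → A := fun g =>
      ⟨Finsupp.equivFunOnFinite.symm (fun i => (g i : ℕ)), by
        simp only [hA, Set.mem_setOf_eq]
        rw [Finsupp.sum]
        calc ∑ i ∈ _, _ ≤ ∑ i : Fin (N+1), (g i : ℕ) := Finset.sum_le_sum_of_subset
              (Finset.subset_univ _)
          _ ≤ ∑ _i : Fin (N+1), s := Finset.sum_le_sum (fun i _ => Nat.le_of_lt_succ (g i).isLt)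
          _ = t := by simp [ht, mul_comm]⟩ with he
    have heinj : Function.Injective e := by
      intro a b hab
      funext i
      have h1 := congrArg (fun (z : A) => ((z : (Fin (N+1)) →₀ ℕ) : Fin (N+1) → ℕ) i) hab
      simp only [he, Finsupp.equivFunOnFinite_symm_coe] at h1
      exact Fin.val_injective h1
    have bV : Basis A K V := basisRestrictSupport K A
    have li : LinearIndependent K (fun g => bV (e g)) := bV.linearIndependent.comp e heinj
    have liW : LinearIndependent K (fun g => Φ (bV (e g))) :=
      li.map' Φ (LinearMap.ker_eq_bot.mpr hinj)
    have hcard := liW.fintype_card_le_finrank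
    have bW : Basis B K W := basisRestrictSupport K B
    have hrankW : finrank K W = Fintype.card B := finrank_eq_card_basis bW
    have hcardB : Fintype.card B ≤ (t*D+1)^N := by
      calc Fintype.card B ≤ Fintype.card (σ → Fin (t*D+1)) := Fintype.card_le_of_injective jB hjBinj
        _ = (t*D+1)^N := by rw [Fintype.card_fun]; simp [hN]
    have hcardA : Fintype.card (Fin (N+1) → Fin (s+1)) = (s+1)^(N+1) := by
      rw [Fintype.card_fun]; simp
    have harith : (t*D+1)^N < (s+1)^(N+1) := by
      have h1 : t*D+1 ≤ M*s := by
        have : (N+1)*s*D + 1 ≤ D*(N+1)*s + s := by nlinarith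
        calc t*D+1 = (N+1)*s*D+1 := by rw [ht]
          _ ≤ D*(N+1)*s + s := this
          _ = M*s := by rw [hM]; ring
      calc (t*D+1)^N ≤ (M*s)^N := Nat.pow_le_pow_left h1 N
        _ = s * s^N := by rw [mul_pow, ← hs]
        _ = s^(N+1) := by ring
        _ < (s+1)^(N+1) := Nat.pow_lt_pow_left (Nat.lt_succ_self s) (Nat.succ_ne_zero N)
    omega
  · rw [Function.not_injective_iff] at hinj
    obtain ⟨a, b, hab, hne⟩ := hinj
    refine ⟨(a : MvPolynomial (Fin (N+1)) K) - (b : MvPolynomial (Fin (N+1)) K), ?_, ?_⟩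
    · intro h
      apply hne
      apply Subtype.ext
      exact sub_eq_zero.mp h
    · have : Φ a = Φ b := hab
      have h2 : (aeval f) (a : MvPolynomial (Fin (N+1)) K) =
          (aeval f) (b : MvPolynomial (Fin (N+1)) K) := by
        have h3 := Subtype.ext_iff.mp this
        simpa [hPhi] using h3
      rw [map_sub, h2, sub_self]


section LB
open MvPolynomial

theorem toric_lower_bound (n : ℕ) (hn : 1 ≤ n) (d : Fin n → ℕ) (hd : ∀ i, 1 ≤ d i)
    (S : Set (Finset (Fin n)))
    (hdown : ∀ σ ∈ S, ∀ τ ⊆ σ, τ ∈ S) (hsingle : ∀ i : Fin n, {i} ∈ S)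
    (N K0 : ℕ) (hK0 : K0 = ∑ i, (d i - 1)) (hN : N = K0 + 1) :
    (N : WithBot (WithTop ℕ)) ≤ ringKrullDim
      (MvPolynomial {x : ∀ i, Fin (d i) // suppIdx x ∈ S} ℝ ⧸
        RingHom.ker (psi n d S).toRingHom) := by
  classical
  set ψ := psi n d S with hψdef
  set I := RingHom.ker ψ.toRingHom with hIdef
  have hcardU : Fintype.card (Σ i : Fin n, Fin (d i - 1)) = K0 := by
    simp [Fintype.card_sigma, hK0]
  set ε : Fin K0 ≃ (Σ i : Fin n, Fin (d i - 1)) := (Fintype.equivFinOfCardEq hcardU).symm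
    with hε
  -- the flag of variable subsets
  set U : Fin (N+1) → Option (Σ i : Fin n, Fin (d i - 1)) → Prop := fun j v =>
    v.elim ((j : ℕ) = N) (fun u => ∃ i : Fin K0, (i : ℕ) < (j : ℕ) ∧ ε i = u) with hU
  set g : Fin (N+1) → Option (Σ i : Fin n, Fin (d i - 1)) →
      MvPolynomial (Option (Σ i : Fin n, Fin (d i - 1))) ℝ := fun j v =>
    if U j v then 0 else X v with hg
  have hUmono : ∀ (j j' : Fin (N+1)), (j : ℕ) ≤ (j' : ℕ) → ∀ v, U j v → U j' v := by
    intro j j' hjj v hv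
    cases v with
    | none =>
      simp only [hU, Option.elim] at hv ⊢
      have := j'.isLt
      omega
    | some u =>
      simp only [hU, Option.elim] at hv ⊢
      obtain ⟨i, hi, hiu⟩ := hv
      exact ⟨i, by omega, hiu⟩
  have haeval_g_g : ∀ (j j' : Fin (N+1)), (∀ v, U j v → U j' v) →
      ∀ p : MvPolynomial (Option (Σ i : Fin n, Fin (d i - 1))) ℝ,
        aeval (g j') (aeval (g j) p) = aeval (g j') p := by
    intro j j' hsub p
    rw [comp_aeval_apply (R := ℝ)]
    congr 1
    apply MvPolynomial.algHom_ext
    intro v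
    simp only [aeval_X]
    by_cases hv : U j v
    · simp [hg, if_pos hv, if_pos (hsub v hv)]
    · simp [hg, if_neg hv]
  -- the primes in the target ring
  set P : Fin (N+1) → Ideal (MvPolynomial (Option (Σ i : Fin n, Fin (d i - 1))) ℝ) := fun j =>
    RingHom.ker ((aeval (g j)).toRingHom :
      MvPolynomial (Option (Σ i : Fin n, Fin (d i - 1))) ℝ →+*
      MvPolynomial (Option (Σ i : Fin n, Fin (d i - 1))) ℝ) with hP
  have hPprime : ∀ j, (P j).IsPrime := fun j => RingHom.ker_isPrime _
  have hPmem : ∀ j p, p ∈ P j ↔ aeval (g j) p = 0 := fun j p => Iff.rfl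
  have hPmono : ∀ (j j' : Fin (N+1)), (j : ℕ) ≤ (j' : ℕ) → P j ≤ P j' := by
    intro j j' hjj p hp
    rw [hPmem] at hp ⊢
    rw [← haeval_g_g j j' (hUmono j j' hjj), hp, map_zero]
  -- pulled back primes
  set q : Fin (N+1) → Ideal (MvPolynomial {x : ∀ i, Fin (d i) // suppIdx x ∈ S} ℝ) := fun j =>
    Ideal.comap ψ.toRingHom (P j) with hq
  have hqprime : ∀ j, (q j).IsPrime := fun j => Ideal.IsPrime.comap _ (hK := hPprime j)
  have hIq : ∀ j, I ≤ q j := by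
    intro j a ha
    have : ψ a = 0 := ha
    show ψ.toRingHom a ∈ P j
    rw [hPmem]
    show aeval (g j) (ψ a) = 0
    rw [this, map_zero]
  have hqmono : ∀ (j j' : Fin (N+1)), (j : ℕ) ≤ (j' : ℕ) → q j ≤ q j' :=
    fun j j' hjj => Ideal.comap_mono (hPmono j j' hjj)
  -- witnesses
  have hd1 : ∀ i : Fin n, d i - 1 < d i := fun i => by have := hd i; omega
  set x0 : ∀ i : Fin n, Fin (d i) := fun i => ⟨d i - 1, hd1 i⟩ with hx0
  have hsupp0 : suppIdx x0 = ∅ := by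
    ext j
    simp [suppIdx, hx0]
  have hx0S : suppIdx x0 ∈ S := by
    rw [hsupp0]
    exact hdown _ (hsingle ⟨0, hn⟩) ∅ (Finset.empty_subset _)
  have hψ0 : ψ (X ⟨x0, hx0S⟩) = X none := by
    rw [hψdef, psi, aeval_X]
    have hat : (suppIdx x0).attach = ∅ := by
      rw [Finset.attach_eq_empty_iff]
      exact hsupp0
    rw [hat, Finset.prod_empty, mul_one]
  -- the single-support witnesses
  set xu : (Σ i : Fin n, Fin (d i - 1)) → ∀ i : Fin n, Fin (d i) := fun u j =>
    ⟨if j = u.1 then (u.2 : ℕ) else d j - 1, by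
      split
      · next h =>
        subst h
        have := u.2.isLt
        omega
      · exact hd1 j⟩ with hxu
  have hsuppu : ∀ u, suppIdx (xu u) = {u.1} := by
    intro u
    ext j
    simp only [suppIdx, Finset.mem_filter, Finset.mem_univ, true_and, Finset.mem_singleton]
    by_cases h : j = u.1
    · simp only [hxu, if_pos h]
      have h1 := u.2.isLt
      have h2 := hd u.1
      constructor
      · intro _; exact h
      · intro _; subst h; omega
    · simp only [hxu, if_neg h]
      exact ⟨fun hne => absurd rfl hne, fun hj => absurd hj h⟩
  have hxuS : ∀ u, suppIdx (xu u) ∈ S := fun u => by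
    rw [hsuppu u]; exact hsingle u.1
  have hψu : ∀ u, ψ (X ⟨xu u, hxuS u⟩) = X none * X (some u) := by
    intro u
    rw [hψdef, psi, aeval_X]
    congr 1
    have hmem : u.1 ∈ suppIdx (xu u) := by
      rw [hsuppu u]; exact Finset.mem_singleton_self _
    have hat : (suppIdx (xu u)).attach = {⟨u.1, hmem⟩} := by
      rw [Finset.eq_singleton_iff_unique_mem]
      refine ⟨Finset.mem_attach _ _, ?_⟩
      intro b _
      have hb : b.1 ∈ ({u.1} : Finset (Fin n)) := by rw [← hsuppu u]; exact b.2
      exact Subtype.ext (Finset.mem_singleton.mp hb)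
    rw [hat, Finset.prod_singleton]
    congr 1
    rcases u with ⟨i, k⟩
    have hval : ((xu ⟨i, k⟩ i : ℕ)) = (k : ℕ) := by simp [hxu]
    have h2 : (⟨((xu ⟨i, k⟩) i : ℕ), by
        have h1 : ((xu ⟨i,k⟩ i : ℕ)) < d i := (xu ⟨i,k⟩ i).isLt
        have h2 : ((xu ⟨i,k⟩ i : ℕ)) ≠ d i - 1 := by
          have := k.isLt; rw [hval]; omega
        omega⟩ : Fin (d i - 1)) = k := Fin.ext hval
    rw [h2]
  -- nonmembership facts
  have hnone_notU : ∀ j : Fin (N+1), (j : ℕ) ≠ N → ¬ U j none := by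
    intro j hj h
    exact hj h
  have hg0 : ∀ j v, U j v → g j v = 0 := fun j v hv => by rw [hg]; exact if_pos hv
  have hgX : ∀ j v, ¬ U j v → g j v = X v := fun j v hv => by rw [hg]; exact if_neg hv
  have hnotUnone : ∀ j : Fin N, ¬ U j.castSucc none := by
    intro j hc
    have h2 : ((j.castSucc : Fin (N+1)) : ℕ) = N := hc
    simp only [Fin.coe_castSucc] at h2
    have := j.isLt
    omega
  -- the strict chain of primes in the source ring
  have hstep : ∀ j : Fin N, q j.castSucc < q j.succ := by
    intro j
    have hle : q j.castSucc ≤ q j.succ := by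
      apply hqmono
      simp only [Fin.coe_castSucc, Fin.val_succ]
      omega
    by_cases hj : (j : ℕ) < K0
    · set u := ε ⟨(j : ℕ), hj⟩ with hu
      set r : MvPolynomial {x : ∀ i, Fin (d i) // suppIdx x ∈ S} ℝ := X ⟨xu u, hxuS u⟩ with hr
      have hin : r ∈ q j.succ := by
        show aeval (g j.succ) (ψ r) = 0
        rw [hr, hψu u, map_mul, aeval_X, aeval_X]
        have husome : U j.succ (some u) := by
          refine ⟨⟨(j : ℕ), hj⟩, ?_, rfl⟩
          simp only [Fin.val_succ]
          omega
        rw [hg0 _ _ husome, mul_zero]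
      have hnotin : r ∉ q j.castSucc := by
        intro hmem
        have h0 : aeval (g j.castSucc) (ψ r) = 0 := hmem
        rw [hr, hψu u, map_mul, aeval_X, aeval_X] at h0
        have h2 : ¬ U j.castSucc (some u) := by
          intro hc
          obtain ⟨i, hi, hiu⟩ := hc
          have hieq : i = ⟨(j : ℕ), hj⟩ := ε.injective (by rw [hiu, hu])
          rw [hieq] at hi
          simp only [Fin.coe_castSucc] at hi
          omega
        rw [hgX _ _ (hnotUnone j), hgX _ _ h2] at h0
        exact (mul_ne_zero (X_ne_zero _) (X_ne_zero _)) h0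
      exact lt_of_le_of_ne hle (fun heq => hnotin (by rw [heq]; exact hin))
    · set r : MvPolynomial {x : ∀ i, Fin (d i) // suppIdx x ∈ S} ℝ := X ⟨x0, hx0S⟩ with hr
      have hjK : (j : ℕ) = K0 := by have := j.isLt; omega
      have hin : r ∈ q j.succ := by
        show aeval (g j.succ) (ψ r) = 0
        rw [hr, hψ0, aeval_X]
        have hnone : U j.succ none := by
          show ((j.succ : Fin (N+1)) : ℕ) = N
          simp only [Fin.val_succ]
          omega
        rw [hg0 _ _ hnone]
      have hnotin : r ∉ q j.castSucc := by
        intro hmem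
        have h0 : aeval (g j.castSucc) (ψ r) = 0 := hmem
        rw [hr, hψ0, aeval_X, hgX _ _ (hnotUnone j)] at h0
        exact (X_ne_zero _) h0
      exact lt_of_le_of_ne hle (fun heq => hnotin (by rw [heq]; exact hin))
  -- push the chain to the quotient
  set mk := Ideal.Quotient.mk I with hmk
  have hmksurj : Function.Surjective mk := Ideal.Quotient.mk_surjective
  have hkermk : RingHom.ker mk = I := Ideal.mk_ker
  have hmapprime : ∀ j, (Ideal.map mk (q j)).IsPrime := by
    intro j
    exact Ideal.map_isPrime_of_surjective hmksurj (by rw [hkermk]; exact hIq j)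
  have hcomapmap : ∀ j, Ideal.comap mk (Ideal.map mk (q j)) = q j := by
    intro j
    rw [Ideal.comap_map_of_surjective mk hmksurj, ← RingHom.ker_eq_comap_bot, hkermk]
    exact sup_eq_left.mpr (hIq j)
  have hmapstrict : ∀ j : Fin N, Ideal.map mk (q j.castSucc) < Ideal.map mk (q j.succ) := by
    intro j
    refine lt_of_le_of_ne (Ideal.map_mono (hstep j).le) (fun heq => ?_)
    have hcc := congrArg (Ideal.comap mk) heq
    rw [hcomapmap, hcomapmap] at hcc
    exact (hstep j).ne hcc
  set series : LTSeries (PrimeSpectrum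
      (MvPolynomial {x : ∀ i, Fin (d i) // suppIdx x ∈ S} ℝ ⧸ I)) :=
    { length := N
      toFun := fun j => ⟨Ideal.map mk (q j), hmapprime j⟩
      step := fun j => hmapstrict j } with hseries
  have hfin := Order.LTSeries.length_le_krullDim series
  rw [ringKrullDim]
  exact hfin

end LB

section Glue
open MvPolynomial

theorem ringKrullDim_le_of_injective_alghom {K : Type*} [Field K] {σ : Type*} [Fintype σ]
    [DecidableEq σ] {Q : Type*} [CommRing Q] [Algebra K Q] (φ : Q →ₐ[K] MvPolynomial σ K)
    (hinj : Function.Injective φ) (N : ℕ) (hN : Fintype.card σ = N) :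
    ringKrullDim Q ≤ (N : WithBot (WithTop ℕ)) := by
  apply ringKrullDim_le_of_forall_algdep K N
  intro x
  obtain ⟨p, hp, hpe⟩ := exists_algdep_of_card N hN (fun i => φ (x i))
  refine ⟨p, hp, ?_⟩
  apply hinj
  rw [map_zero, ← hpe, ← comp_aeval_apply]

end Glue

/-- For a simplicial complex `S`, the Krull dimension of the quotient of
the polynomial ring in the relevant Möbius coordinates by the kernel of the monomial
map `ψ` equals `1 + ∑ i (d i - 1)`. -/
theorem krullDim_toric_quotient (n : ℕ) (hn : 1 ≤ n) (d : Fin n → ℕ)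
    (hd : ∀ i, 1 ≤ d i) (S : Set (Finset (Fin n)))
    (hdown : ∀ σ ∈ S, ∀ τ ⊆ σ, τ ∈ S) (hsingle : ∀ i : Fin n, {i} ∈ S) :
    ringKrullDim
        (MvPolynomial {x : ∀ i, Fin (d i) // suppIdx x ∈ S} ℝ ⧸
          RingHom.ker (psi n d S).toRingHom) =
      ((1 + ∑ i, (d i - 1) : ℕ) : WithBot (WithTop ℕ)) := by
  classical
  set ψ := psi n d S with hψ
  set I := RingHom.ker ψ.toRingHom with hI
  set N := 1 + ∑ i, (d i - 1) with hNdef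
  set K0 := ∑ i, (d i - 1) with hK0
  have hNK : N = K0 + 1 := by omega
  have hcardσ : Fintype.card (Option (Σ i : Fin n, Fin (d i - 1))) = N := by
    simp only [Fintype.card_option, Fintype.card_sigma, Fintype.card_fin]
    omega
  have hub : ringKrullDim (MvPolynomial {x : ∀ i, Fin (d i) // suppIdx x ∈ S} ℝ ⧸ I) ≤
      (N : WithBot (WithTop ℕ)) := by
    set φ : (MvPolynomial {x : ∀ i, Fin (d i) // suppIdx x ∈ S} ℝ ⧸ I) →ₐ[ℝ]
        MvPolynomial (Option (Σ i : Fin n, Fin (d i - 1))) ℝ :=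
      Ideal.Quotient.liftₐ I ψ (fun a ha => ha) with hφ
    have hφinj : Function.Injective φ := by
      rw [injective_iff_map_eq_zero]
      intro q hq
      obtain ⟨a, rfl⟩ := Ideal.Quotient.mk_surjective q
      rw [Ideal.Quotient.eq_zero_iff_mem]
      have : φ (Ideal.Quotient.mk I a) = ψ a := Ideal.Quotient.liftₐ_apply I ψ _ a
      rw [this] at hq
      exact hq
    exact ringKrullDim_le_of_injective_alghom φ hφinj N hcardσ
  have hlb : (N : WithBot (WithTop ℕ)) ≤
      ringKrullDim (MvPolynomial {x : ∀ i, Fin (d i) // suppIdx x ∈ S} ℝ ⧸ I) :=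
    toric_lower_bound n hn d hd S hdown hsingle N K0 hK0 hNK
  exact le_antisymm hub hlb
end

section
/- Let Σ be a simplicial complex on Fin n. Consider the monomial parametrization map sending a parameter vector (λ, θ), with λ ∈ ℝ and θ^(i)_k ∈ ℝ for i ∈ Fin n and 0 ≤ k < d i − 1, to the family whose entry at each relevant index x is λ · ∏_{i ∈ supp(x)} θ^(i)_{x i}. This map is injective on the set of parameter vectors with λ ≠ 0. -/
/-- The monomial parametrization: the entry at an index `x` is
`λ · ∏_{i ∈ supp(x)} θ⁽ⁱ⁾_{x i}`, where the parameters are `λ : ℝ` and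
`θ⁽ⁱ⁾_k : ℝ` for `0 ≤ k < d i - 1`. -/
def monParam {n : ℕ} {d : Fin n → ℕ} (l : ℝ) (θ : ∀ i, Fin (d i - 1) → ℝ)
    (x : ∀ i, Fin (d i)) : ℝ :=
  l * ∏ i ∈ (suppIdx x).attach,
    θ i.1 ⟨(x i.1 : ℕ), by
      have h1 : ((x i.1 : ℕ)) < d i.1 := (x i.1).isLt
      have h2 : ((x i.1 : ℕ)) ≠ d i.1 - 1 := (Finset.mem_filter.mp i.2).2
      omega⟩

lemma prod_attach_empty' {α : Type*} (s : Finset α) (hs : s = ∅)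
    (f : {a // a ∈ s} → ℝ) : ∏ a ∈ s.attach, f a = 1 := by
  subst hs; simp

lemma prod_attach_singleton' {α : Type*} (s : Finset α) (a : α) (hs : s = {a})
    (f : {b // b ∈ s} → ℝ) : ∏ b ∈ s.attach, f b = f ⟨a, hs ▸ Finset.mem_singleton_self a⟩ := by
  subst hs
  have ha : ({a} : Finset α).attach = {⟨a, Finset.mem_singleton_self a⟩} := by
    ext ⟨b, hb⟩
    simpa [Subtype.ext_iff] using Finset.mem_singleton.mp hb
  rw [ha, Finset.prod_singleton]

/-- For a simplicial complex `S`, the monomial parametrization map,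
sending `(λ, θ)` to the family with entry `λ · ∏_{i ∈ supp(x)} θ⁽ⁱ⁾_{x i}` at each
relevant index `x`, is injective on the set of parameter vectors with `λ ≠ 0`. -/
theorem monParam_injective (n : ℕ) (hn : 1 ≤ n) (d : Fin n → ℕ)
    (hd : ∀ i, 1 ≤ d i) (S : Set (Finset (Fin n)))
    (hdown : ∀ σ ∈ S, ∀ τ ⊆ σ, τ ∈ S) (hsingle : ∀ i : Fin n, {i} ∈ S)
    (l l' : ℝ) (θ θ' : ∀ i, Fin (d i - 1) → ℝ) (hl : l ≠ 0) (hl' : l' ≠ 0)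
    (h : ∀ x : ∀ i, Fin (d i), suppIdx x ∈ S → monParam l θ x = monParam l' θ' x) :
    l = l' ∧ θ = θ' := by
  -- the base index: all coordinates at the last state
  set x0 : ∀ i, Fin (d i) := fun i => ⟨d i - 1, by have := hd i; omega⟩ with hx0
  have hsupp0 : suppIdx x0 = ∅ := by
    ext j; simp [suppIdx, x0]
  have hempty : (∅ : Finset (Fin n)) ∈ S := by
    have := hdown {⟨0, hn⟩} (hsingle _) ∅ (Finset.empty_subset _)
    exact this
  have hll : l = l' := by
    have := h x0 (by rw [hsupp0]; exact hempty)
    rw [monParam, monParam, prod_attach_empty' _ hsupp0, prod_attach_empty' _ hsupp0] at this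
    simpa using this
  refine ⟨hll, ?_⟩
  funext i k
  set x : ∀ j, Fin (d j) := Function.update x0 i ⟨(k : ℕ), by have := k.isLt; omega⟩ with hx
  have hxi : (x i : ℕ) = (k : ℕ) := by simp [x]
  have hxj : ∀ j, j ≠ i → (x j : ℕ) = d j - 1 := by
    intro j hj; simp [x, Function.update_of_ne hj, x0]
  have hsupp : suppIdx x = {i} := by
    ext j
    simp only [suppIdx, Finset.mem_filter, Finset.mem_univ, true_and, Finset.mem_singleton]
    constructor
    · intro hne
      by_contra hji
      exact hne (hxj j hji)
    · rintro rfl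
      rw [hxi]
      have := k.isLt
      omega
  have hmem := h x (by rw [hsupp]; exact hsingle i)
  rw [monParam, monParam,
    prod_attach_singleton' _ i hsupp, prod_attach_singleton' _ i hsupp] at hmem
  rw [hll] at hmem
  simp only [hxi, Fin.eta] at hmem
  exact mul_left_cancel₀ hl' hmem
end

section
/- Fix n ≥ 5 and let Σ_n be the graph complex defined in the context. Let b : {1,…,n} → ℕ be given by b_i = 2 for 1 ≤ i ≤ n−4 and b_i = 1 for n−3 ≤ i ≤ n. Then there are exactly two finitely supported functions m from the faces of Σ_n to ℕ such that ∑_σ m(σ) = n − 2 and, for every vertex i, ∑_{σ ∋ i} m(σ) = b_i. -/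
/-- For `n ≥ 5`, the one-dimensional simplicial complex on the vertex set `{1, …, n}`
whose faces are the empty set, all singletons, the path edges `{i, i+1}` for
`1 ≤ i ≤ n-5`, and the edges `{n-4, n-3}`, `{n-4, n-2}`, `{n-3, n-2}`, `{1, n-1}`,
`{1, n}`, `{n-1, n}` (a path whose two ends are completed to triangles). -/
def graphComplex (n : ℕ) : Set (Finset ℕ) :=
  {σ | σ = ∅ ∨ (∃ i, 1 ≤ i ∧ i ≤ n ∧ σ = {i}) ∨
       (∃ i, 1 ≤ i ∧ i ≤ n - 5 ∧ σ = {i, i + 1}) ∨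
       σ = {n - 4, n - 3} ∨ σ = {n - 4, n - 2} ∨ σ = {n - 3, n - 2} ∨
       σ = {1, n - 1} ∨ σ = {1, n} ∨ σ = {n - 1, n}}

lemma pair_eq_pair_iff (a b c d : ℕ) :
    ({a, b} : Finset ℕ) = {c, d} ↔ (a = c ∧ b = d) ∨ (a = d ∧ b = c) := by
  constructor
  · intro h
    have ha : a ∈ ({c, d} : Finset ℕ) := h ▸ Finset.mem_insert_self a {b}
    have hb : b ∈ ({c, d} : Finset ℕ) := h ▸ Finset.mem_insert_of_mem (Finset.mem_singleton_self b)
    have hc : c ∈ ({a, b} : Finset ℕ) := h ▸ Finset.mem_insert_self c {d}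
    have hd : d ∈ ({a, b} : Finset ℕ) := h ▸ Finset.mem_insert_of_mem (Finset.mem_singleton_self d)
    simp only [Finset.mem_insert, Finset.mem_singleton] at ha hb hc hd
    omega
  · rintro (⟨rfl, rfl⟩ | ⟨rfl, rfl⟩)
    · rfl
    · exact Finset.pair_comm a b

noncomputable def pathPart (q s : ℕ) : Finset ℕ →₀ ℕ :=
  ∑ j ∈ Finset.range q, Finsupp.single {2 * j + s, 2 * j + s + 1} 2

lemma pathPart_pair (q s i : ℕ) (hs : 1 ≤ s) :
    pathPart q s {i, i + 1} = if i % 2 = s % 2 ∧ s ≤ i ∧ i < 2 * q + s then 2 else 0 := by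
  induction q with
  | zero => simp [pathPart]
  | succ q ih =>
    rw [pathPart, Finset.sum_range_succ, ← pathPart, Finsupp.add_apply, ih,
      Finsupp.single_apply]
    simp only [pair_eq_pair_iff]
    split_ifs <;> omega

lemma pathPart_nonpair (q s : ℕ) (σ : Finset ℕ) (h : ∀ j, j < q → σ ≠ {2 * j + s, 2 * j + s + 1}) :
    pathPart q s σ = 0 := by
  induction q with
  | zero => simp [pathPart]
  | succ q ih =>
    rw [pathPart, Finset.sum_range_succ, ← pathPart, Finsupp.add_apply,
      ih (fun j hj => h j (by omega)),
      Finsupp.single_apply, if_neg (fun hh => h q (by omega) hh.symm)]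
    rfl

noncomputable def mass (m : Finset ℕ →₀ ℕ) : ℕ := m.sum fun _ v => v

noncomputable def deg (m : Finset ℕ →₀ ℕ) (v : ℕ) : ℕ :=
  m.sum fun σ x => if v ∈ σ then x else 0

lemma mass_add (f g : Finset ℕ →₀ ℕ) : mass (f + g) = mass f + mass g :=
  Finsupp.sum_add_index' (fun _ => rfl) (fun _ _ _ => rfl)

lemma mass_single (σ : Finset ℕ) (c : ℕ) : mass (Finsupp.single σ c) = c :=
  Finsupp.sum_single_index rfl

lemma deg_add (f g : Finset ℕ →₀ ℕ) (v : ℕ) : deg (f + g) v = deg f v + deg g v :=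
  Finsupp.sum_add_index' (fun σ => by simp) (fun σ x y => by split_ifs <;> simp)

lemma deg_single (σ : Finset ℕ) (c : ℕ) (v : ℕ) :
    deg (Finsupp.single σ c) v = if v ∈ σ then c else 0 := by
  rw [deg, Finsupp.sum_single_index] <;> simp

lemma mass_pathPart (q s : ℕ) : mass (pathPart q s) = 2 * q := by
  induction q with
  | zero => simp [pathPart, mass]
  | succ q ih =>
    rw [pathPart, Finset.sum_range_succ, ← pathPart, mass_add, ih, mass_single]
    ring

lemma deg_pathPart (q s v : ℕ) (hs : 1 ≤ s) :
    deg (pathPart q s) v = if s ≤ v ∧ v + 1 ≤ 2 * q + s then 2 else 0 := by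
  induction q with
  | zero =>
    simp [pathPart, deg]
  | succ q ih =>
    rw [pathPart, Finset.sum_range_succ, ← pathPart, deg_add, ih, deg_single]
    simp only [Finset.mem_insert, Finset.mem_singleton]
    split_ifs <;> omega

noncomputable def msol (n q s t u : ℕ) : Finset ℕ →₀ ℕ :=
  pathPart q s + Finsupp.single {n-4, n-3} t + Finsupp.single {n-4, n-2} t +
  Finsupp.single {n-3, n-2} (1-t) + Finsupp.single {1, n-1} u + Finsupp.single {1, n} u +
  Finsupp.single {n-1, n} (1-u)

lemma msol_supp {n q s t u : ℕ} (hs : 1 ≤ s) (hq : ∀ j, j < q → 2*j+s ≤ n-5) :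
    ∀ σ, msol n q s t u σ ≠ 0 → σ ∈ graphComplex n := by
  intro σ h
  by_contra hσ
  apply h
  have hp : pathPart q s σ = 0 := by
    apply pathPart_nonpair
    intro j hj heq
    rw [heq] at hσ
    exact hσ (Or.inr (Or.inr (Or.inl ⟨2*j+s, by omega, hq j hj, rfl⟩)))
  have e1 : ({n-4, n-3} : Finset ℕ) ≠ σ := by rintro rfl; exact hσ (by simp [graphComplex])
  have e2 : ({n-4, n-2} : Finset ℕ) ≠ σ := by rintro rfl; exact hσ (by simp [graphComplex])
  have e3 : ({n-3, n-2} : Finset ℕ) ≠ σ := by rintro rfl; exact hσ (by simp [graphComplex])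
  have e4 : ({1, n-1} : Finset ℕ) ≠ σ := by rintro rfl; exact hσ (by simp [graphComplex])
  have e5 : ({1, n} : Finset ℕ) ≠ σ := by rintro rfl; exact hσ (by simp [graphComplex])
  have e6 : ({n-1, n} : Finset ℕ) ≠ σ := by rintro rfl; exact hσ (by simp [graphComplex])
  simp only [msol, Finsupp.add_apply, Finsupp.single_apply, hp, if_neg e1, if_neg e2,
    if_neg e3, if_neg e4, if_neg e5, if_neg e6]
  rfl

lemma msol_mass {n q s t u : ℕ} (ht : t ≤ 1) (hu : u ≤ 1) (h : 2*q + t + u + 2 = n - 2) :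
    mass (msol n q s t u) = n - 2 := by
  simp only [msol, mass_add, mass_single, mass_pathPart]
  omega

lemma msol_deg {n q s t u : ℕ} (hs : 1 ≤ s) (v : ℕ) :
    deg (msol n q s t u) v =
      (if s ≤ v ∧ v + 1 ≤ 2*q + s then 2 else 0) +
      (if v ∈ ({n-4, n-3} : Finset ℕ) then t else 0) +
      (if v ∈ ({n-4, n-2} : Finset ℕ) then t else 0) +
      (if v ∈ ({n-3, n-2} : Finset ℕ) then 1-t else 0) +
      (if v ∈ ({1, n-1} : Finset ℕ) then u else 0) +
      (if v ∈ ({1, n} : Finset ℕ) then u else 0) +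
      (if v ∈ ({n-1, n} : Finset ℕ) then 1-u else 0) := by
  simp only [msol, deg_add, deg_single, deg_pathPart _ _ _ hs]

lemma mass_eq_sum (m : Finset ℕ →₀ ℕ) : mass m = ∑ σ ∈ m.support, m σ := rfl

lemma deg_eq_sum (m : Finset ℕ →₀ ℕ) (v : ℕ) (T : Finset (Finset ℕ))
    (hT : ∀ σ, m σ ≠ 0 → v ∈ σ → σ ∈ T) (hT2 : ∀ σ ∈ T, v ∈ σ) :
    deg m v = ∑ σ ∈ T, m σ := by
  rw [deg, Finsupp.sum, ← Finset.sum_filter]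
  apply Finset.sum_subset
  · intro σ hσ
    rw [Finset.mem_filter] at hσ
    exact hT σ (Finsupp.mem_support_iff.mp hσ.1) hσ.2
  · intro σ hσT hσn
    by_contra h0
    exact hσn (Finset.mem_filter.mpr ⟨Finsupp.mem_support_iff.mpr h0, hT2 σ hσT⟩)

lemma card_two {n : ℕ} (hn : 5 ≤ n) (m : Finset ℕ →₀ ℕ)
    (hsupp : ∀ σ, m σ ≠ 0 → σ ∈ graphComplex n) (hmass : mass m = n - 2)
    (hdeg : ∀ v, 1 ≤ v → v ≤ n → deg m v = if v ≤ n-4 then 2 else 1) :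
    ∀ σ, m σ ≠ 0 → σ.card = 2 := by
  have hsub : ∀ σ ∈ m.support, σ ⊆ Finset.Icc 1 n ∧ σ.card ≤ 2 := by
    intro σ hσ
    have hpair : ∀ a b : ℕ, 1 ≤ a → a ≤ n → 1 ≤ b → b ≤ n →
        ({a, b} : Finset ℕ) ⊆ Finset.Icc 1 n ∧ ({a, b} : Finset ℕ).card ≤ 2 := by
      intro a b h1 h2 h3 h4
      constructor
      · intro x hx
        simp only [Finset.mem_insert, Finset.mem_singleton] at hx
        rw [Finset.mem_Icc]
        omega
      · exact (Finset.card_insert_le _ _).trans (by simp)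
    rcases hsupp σ (Finsupp.mem_support_iff.mp hσ) with rfl | ⟨i,h1,h2,rfl⟩ | ⟨i,h1,h2,rfl⟩ |
      rfl | rfl | rfl | rfl | rfl | rfl
    · simp
    · constructor
      · intro x hx
        simp only [Finset.mem_singleton] at hx
        rw [Finset.mem_Icc]; omega
      · simp
    all_goals apply hpair <;> omega
  have key : ∑ σ ∈ m.support, m σ * σ.card = ∑ σ ∈ m.support, m σ * 2 := by
    calc ∑ σ ∈ m.support, m σ * σ.card
        = ∑ σ ∈ m.support, ∑ v ∈ Finset.Icc 1 n, (if v ∈ σ then m σ else 0) := by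
          apply Finset.sum_congr rfl
          intro σ hσ
          rw [Finset.sum_ite_mem, Finset.inter_eq_right.mpr (hsub σ hσ).1,
            Finset.sum_const, smul_eq_mul, mul_comm]
      _ = ∑ v ∈ Finset.Icc 1 n, ∑ σ ∈ m.support, (if v ∈ σ then m σ else 0) :=
          Finset.sum_comm
      _ = ∑ v ∈ Finset.Icc 1 n, (if v ≤ n-4 then 2 else 1) := by
          apply Finset.sum_congr rfl
          intro v hv
          rw [Finset.mem_Icc] at hv
          rw [← hdeg v hv.1 hv.2]
          rfl
      _ = 2 * (n-4) + 1 * 4 := by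
          rw [Finset.sum_ite, Finset.sum_const, Finset.sum_const]
          have h1 : (Finset.Icc 1 n).filter (fun v => v ≤ n-4) = Finset.Icc 1 (n-4) := by
            ext x
            simp only [Finset.mem_filter, Finset.mem_Icc]
            omega
          have h2 : (Finset.Icc 1 n).filter (fun v => ¬ v ≤ n-4) = Finset.Icc (n-3) n := by
            ext x
            simp only [Finset.mem_filter, Finset.mem_Icc]
            omega
          rw [h1, h2, Nat.card_Icc, Nat.card_Icc, smul_eq_mul, smul_eq_mul]
          omega
      _ = (n - 2) * 2 := by omega
      _ = ∑ σ ∈ m.support, m σ * 2 := by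
          rw [← Finset.sum_mul, ← mass_eq_sum, hmass]
  have hpt := (Finset.sum_eq_sum_iff_of_le
    (fun σ hσ => Nat.mul_le_mul_left (m σ) (hsub σ hσ).2)).mp key
  intro σ hσ
  have := hpt σ (Finsupp.mem_support_iff.mpr hσ)
  have hm : 0 < m σ := Nat.pos_of_ne_zero hσ
  exact Nat.eq_of_mul_eq_mul_left hm this

lemma classify {n : ℕ} (hn : 5 ≤ n) (σ : Finset ℕ) (hσ : σ ∈ graphComplex n)
    (hc : σ.card = 2) (v : ℕ) (hv : v ∈ σ) :
    (∃ i, 1 ≤ i ∧ i ≤ n-5 ∧ (v = i ∨ v = i+1) ∧ σ = {i, i+1}) ∨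
    ((v = n-4 ∨ v = n-3) ∧ σ = {n-4, n-3}) ∨
    ((v = n-4 ∨ v = n-2) ∧ σ = {n-4, n-2}) ∨
    ((v = n-3 ∨ v = n-2) ∧ σ = {n-3, n-2}) ∨
    ((v = 1 ∨ v = n-1) ∧ σ = {1, n-1}) ∨
    ((v = 1 ∨ v = n) ∧ σ = {1, n}) ∨
    ((v = n-1 ∨ v = n) ∧ σ = {n-1, n}) := by
  rcases hσ with rfl | ⟨i,h1,h2,rfl⟩ | ⟨i,h1,h2,rfl⟩ | rfl | rfl | rfl | rfl | rfl | rfl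
  · simp at hc
  · simp at hc
  · exact Or.inl ⟨i, h1, h2, by simpa using hv, rfl⟩
  · exact Or.inr (Or.inl ⟨by simpa using hv, rfl⟩)
  · exact Or.inr (Or.inr (Or.inl ⟨by simpa using hv, rfl⟩))
  · exact Or.inr (Or.inr (Or.inr (Or.inl ⟨by simpa using hv, rfl⟩)))
  · exact Or.inr (Or.inr (Or.inr (Or.inr (Or.inl ⟨by simpa using hv, rfl⟩))))
  · exact Or.inr (Or.inr (Or.inr (Or.inr (Or.inr (Or.inl ⟨by simpa using hv, rfl⟩)))))
  · exact Or.inr (Or.inr (Or.inr (Or.inr (Or.inr (Or.inr ⟨by simpa using hv, rfl⟩)))))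

lemma msol_pair {n q s t u i : ℕ} (hn : 5 ≤ n) (h1 : 1 ≤ i) (h2 : i ≤ n-5) (hs : 1 ≤ s) :
    msol n q s t u {i, i+1} = if i % 2 = s % 2 ∧ s ≤ i ∧ i < 2*q+s then 2 else 0 := by
  simp only [msol, Finsupp.add_apply]
  rw [pathPart_pair _ _ _ hs,
    Finsupp.single_eq_of_ne' (show ({n-4, n-3} : Finset ℕ) ≠ {i, i+1} by rw [Ne, pair_eq_pair_iff]; omega),
    Finsupp.single_eq_of_ne' (show ({n-4, n-2} : Finset ℕ) ≠ {i, i+1} by rw [Ne, pair_eq_pair_iff]; omega),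
    Finsupp.single_eq_of_ne' (show ({n-3, n-2} : Finset ℕ) ≠ {i, i+1} by rw [Ne, pair_eq_pair_iff]; omega),
    Finsupp.single_eq_of_ne' (show ({1, n-1} : Finset ℕ) ≠ {i, i+1} by rw [Ne, pair_eq_pair_iff]; omega),
    Finsupp.single_eq_of_ne' (show ({1, n} : Finset ℕ) ≠ {i, i+1} by rw [Ne, pair_eq_pair_iff]; omega),
    Finsupp.single_eq_of_ne' (show ({n-1, n} : Finset ℕ) ≠ {i, i+1} by rw [Ne, pair_eq_pair_iff]; omega)]
  simp

lemma msol_A1 {n q s t u : ℕ} (hn : 5 ≤ n) (hs : 1 ≤ s) (hq : ∀ j, j < q → 2*j+s ≤ n-5) :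
    msol n q s t u {n-4, n-3} = t := by
  simp only [msol, Finsupp.add_apply]
  rw [pathPart_nonpair _ _ _ (fun j hj heq => by
        rw [pair_eq_pair_iff] at heq; have := hq j hj; omega),
    Finsupp.single_eq_same,
    Finsupp.single_eq_of_ne' (show ({n-4, n-2} : Finset ℕ) ≠ {n-4, n-3} by rw [Ne, pair_eq_pair_iff]; omega),
    Finsupp.single_eq_of_ne' (show ({n-3, n-2} : Finset ℕ) ≠ {n-4, n-3} by rw [Ne, pair_eq_pair_iff]; omega),
    Finsupp.single_eq_of_ne' (show ({1, n-1} : Finset ℕ) ≠ {n-4, n-3} by rw [Ne, pair_eq_pair_iff]; omega),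
    Finsupp.single_eq_of_ne' (show ({1, n} : Finset ℕ) ≠ {n-4, n-3} by rw [Ne, pair_eq_pair_iff]; omega),
    Finsupp.single_eq_of_ne' (show ({n-1, n} : Finset ℕ) ≠ {n-4, n-3} by rw [Ne, pair_eq_pair_iff]; omega)]
  simp

lemma msol_A2 {n q s t u : ℕ} (hn : 5 ≤ n) (hs : 1 ≤ s) (hq : ∀ j, j < q → 2*j+s ≤ n-5) :
    msol n q s t u {n-4, n-2} = t := by
  simp only [msol, Finsupp.add_apply]
  rw [pathPart_nonpair _ _ _ (fun j hj heq => by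
        rw [pair_eq_pair_iff] at heq; have := hq j hj; omega),
    Finsupp.single_eq_of_ne' (show ({n-4, n-3} : Finset ℕ) ≠ {n-4, n-2} by rw [Ne, pair_eq_pair_iff]; omega),
    Finsupp.single_eq_same,
    Finsupp.single_eq_of_ne' (show ({n-3, n-2} : Finset ℕ) ≠ {n-4, n-2} by rw [Ne, pair_eq_pair_iff]; omega),
    Finsupp.single_eq_of_ne' (show ({1, n-1} : Finset ℕ) ≠ {n-4, n-2} by rw [Ne, pair_eq_pair_iff]; omega),
    Finsupp.single_eq_of_ne' (show ({1, n} : Finset ℕ) ≠ {n-4, n-2} by rw [Ne, pair_eq_pair_iff]; omega),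
    Finsupp.single_eq_of_ne' (show ({n-1, n} : Finset ℕ) ≠ {n-4, n-2} by rw [Ne, pair_eq_pair_iff]; omega)]
  simp

lemma msol_A3 {n q s t u : ℕ} (hn : 5 ≤ n) (hs : 1 ≤ s) (hq : ∀ j, j < q → 2*j+s ≤ n-5) :
    msol n q s t u {n-3, n-2} = 1-t := by
  simp only [msol, Finsupp.add_apply]
  rw [pathPart_nonpair _ _ _ (fun j hj heq => by
        rw [pair_eq_pair_iff] at heq; have := hq j hj; omega),
    Finsupp.single_eq_of_ne' (show ({n-4, n-3} : Finset ℕ) ≠ {n-3, n-2} by rw [Ne, pair_eq_pair_iff]; omega),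
    Finsupp.single_eq_of_ne' (show ({n-4, n-2} : Finset ℕ) ≠ {n-3, n-2} by rw [Ne, pair_eq_pair_iff]; omega),
    Finsupp.single_eq_same,
    Finsupp.single_eq_of_ne' (show ({1, n-1} : Finset ℕ) ≠ {n-3, n-2} by rw [Ne, pair_eq_pair_iff]; omega),
    Finsupp.single_eq_of_ne' (show ({1, n} : Finset ℕ) ≠ {n-3, n-2} by rw [Ne, pair_eq_pair_iff]; omega),
    Finsupp.single_eq_of_ne' (show ({n-1, n} : Finset ℕ) ≠ {n-3, n-2} by rw [Ne, pair_eq_pair_iff]; omega)]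
  simp

lemma msol_B1 {n q s t u : ℕ} (hn : 5 ≤ n) (hs : 1 ≤ s) (hq : ∀ j, j < q → 2*j+s ≤ n-5) :
    msol n q s t u {1, n-1} = u := by
  simp only [msol, Finsupp.add_apply]
  rw [pathPart_nonpair _ _ _ (fun j hj heq => by
        rw [pair_eq_pair_iff] at heq; have := hq j hj; omega),
    Finsupp.single_eq_of_ne' (show ({n-4, n-3} : Finset ℕ) ≠ {1, n-1} by rw [Ne, pair_eq_pair_iff]; omega),
    Finsupp.single_eq_of_ne' (show ({n-4, n-2} : Finset ℕ) ≠ {1, n-1} by rw [Ne, pair_eq_pair_iff]; omega),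
    Finsupp.single_eq_of_ne' (show ({n-3, n-2} : Finset ℕ) ≠ {1, n-1} by rw [Ne, pair_eq_pair_iff]; omega),
    Finsupp.single_eq_same,
    Finsupp.single_eq_of_ne' (show ({1, n} : Finset ℕ) ≠ {1, n-1} by rw [Ne, pair_eq_pair_iff]; omega),
    Finsupp.single_eq_of_ne' (show ({n-1, n} : Finset ℕ) ≠ {1, n-1} by rw [Ne, pair_eq_pair_iff]; omega)]
  simp

lemma msol_B2 {n q s t u : ℕ} (hn : 5 ≤ n) (hs : 1 ≤ s) (hq : ∀ j, j < q → 2*j+s ≤ n-5) :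
    msol n q s t u {1, n} = u := by
  simp only [msol, Finsupp.add_apply]
  rw [pathPart_nonpair _ _ _ (fun j hj heq => by
        rw [pair_eq_pair_iff] at heq; have := hq j hj; omega),
    Finsupp.single_eq_of_ne' (show ({n-4, n-3} : Finset ℕ) ≠ {1, n} by rw [Ne, pair_eq_pair_iff]; omega),
    Finsupp.single_eq_of_ne' (show ({n-4, n-2} : Finset ℕ) ≠ {1, n} by rw [Ne, pair_eq_pair_iff]; omega),
    Finsupp.single_eq_of_ne' (show ({n-3, n-2} : Finset ℕ) ≠ {1, n} by rw [Ne, pair_eq_pair_iff]; omega),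
    Finsupp.single_eq_of_ne' (show ({1, n-1} : Finset ℕ) ≠ {1, n} by rw [Ne, pair_eq_pair_iff]; omega),
    Finsupp.single_eq_same,
    Finsupp.single_eq_of_ne' (show ({n-1, n} : Finset ℕ) ≠ {1, n} by rw [Ne, pair_eq_pair_iff]; omega)]
  simp

lemma msol_B3 {n q s t u : ℕ} (hn : 5 ≤ n) (hs : 1 ≤ s) (hq : ∀ j, j < q → 2*j+s ≤ n-5) :
    msol n q s t u {n-1, n} = 1-u := by
  simp only [msol, Finsupp.add_apply]
  rw [pathPart_nonpair _ _ _ (fun j hj heq => by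
        rw [pair_eq_pair_iff] at heq; have := hq j hj; omega),
    Finsupp.single_eq_of_ne' (show ({n-4, n-3} : Finset ℕ) ≠ {n-1, n} by rw [Ne, pair_eq_pair_iff]; omega),
    Finsupp.single_eq_of_ne' (show ({n-4, n-2} : Finset ℕ) ≠ {n-1, n} by rw [Ne, pair_eq_pair_iff]; omega),
    Finsupp.single_eq_of_ne' (show ({n-3, n-2} : Finset ℕ) ≠ {n-1, n} by rw [Ne, pair_eq_pair_iff]; omega),
    Finsupp.single_eq_of_ne' (show ({1, n-1} : Finset ℕ) ≠ {n-1, n} by rw [Ne, pair_eq_pair_iff]; omega),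
    Finsupp.single_eq_of_ne' (show ({1, n} : Finset ℕ) ≠ {n-1, n} by rw [Ne, pair_eq_pair_iff]; omega),
    Finsupp.single_eq_same]
  simp

set_option maxHeartbeats 2000000 in
lemma deg_m1 {n : ℕ} (hn : 5 ≤ n) : ∀ v, 1 ≤ v → v ≤ n →
    deg (msol n ((n-4)/2) 1 (n%2) 0) v = if v ≤ n-4 then 2 else 1 := by
  intro v h1 h2
  rw [msol_deg (by norm_num)]
  simp only [Finset.mem_insert, Finset.mem_singleton]
  split_ifs <;> omega

set_option maxHeartbeats 2000000 in
lemma deg_m2 {n : ℕ} (hn : 5 ≤ n) : ∀ v, 1 ≤ v → v ≤ n →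
    deg (msol n ((n-5)/2) 2 (1-n%2) 1) v = if v ≤ n-4 then 2 else 1 := by
  intro v h1 h2
  rw [msol_deg (by norm_num)]
  simp only [Finset.mem_insert, Finset.mem_singleton]
  split_ifs <;> omega


/-- For `n ≥ 5` and the degree vector `b` with `b i = 2` for
`1 ≤ i ≤ n - 4` and `b i = 1` for `n - 3 ≤ i ≤ n`, there are exactly two finitely
supported functions `m` from the faces of `Σ_n` to `ℕ` with total mass `n - 2` such
that every vertex `i ∈ {1, …, n}` is covered exactly `b i` times. -/
theorem two_balanced_multisets (n : ℕ) (hn : 5 ≤ n) :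
    ∃ m₁ m₂ : Finset ℕ →₀ ℕ, m₁ ≠ m₂ ∧
      ∀ m : Finset ℕ →₀ ℕ,
        ((∀ σ, m σ ≠ 0 → σ ∈ graphComplex n) ∧
          (m.sum fun _ v => v) = n - 2 ∧
          (∀ i, 1 ≤ i → i ≤ n →
            (m.sum fun σ v => if i ∈ σ then v else 0) =
              if i ≤ n - 4 then 2 else 1)) ↔
          (m = m₁ ∨ m = m₂) := by
  have hq1 : ∀ j, j < (n-4)/2 → 2*j+1 ≤ n-5 := by intro j hj; omega
  have hq2 : ∀ j, j < (n-5)/2 → 2*j+2 ≤ n-5 := by intro j hj; omega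
  have hs1 : ∀ σ, msol n ((n-4)/2) 1 (n%2) 0 σ ≠ 0 → σ ∈ graphComplex n :=
    msol_supp (by norm_num) hq1
  have hs2 : ∀ σ, msol n ((n-5)/2) 2 (1-n%2) 1 σ ≠ 0 → σ ∈ graphComplex n :=
    msol_supp (by norm_num) hq2
  have hm1 : mass (msol n ((n-4)/2) 1 (n%2) 0) = n - 2 := msol_mass (by omega) (by omega) (by omega)
  have hm2 : mass (msol n ((n-5)/2) 2 (1-n%2) 1) = n - 2 := msol_mass (by omega) (by omega) (by omega)
  have hd1 := deg_m1 hn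
  have hd2 := deg_m2 hn
  refine ⟨msol n ((n-4)/2) 1 (n%2) 0, msol n ((n-5)/2) 2 (1-n%2) 1, ?_, ?_⟩
  · intro h
    have e1 := msol_B3 (n:=n) (q:=(n-4)/2) (s:=1) (t:=n%2) (u:=0) hn (by norm_num) hq1
    have e2 := msol_B3 (n:=n) (q:=(n-5)/2) (s:=2) (t:=1-n%2) (u:=1) hn (by norm_num) hq2
    rw [h, e2] at e1
    omega
  · intro m
    constructor
    · rintro ⟨hsupp, hmass, hdeg⟩
      have hmass' : mass m = n - 2 := hmass
      have hdeg' : ∀ v, 1 ≤ v → v ≤ n → deg m v = if v ≤ n-4 then 2 else 1 := hdeg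
      have hc2 := card_two hn m hsupp hmass' hdeg'
      have hc21 := card_two hn _ hs1 hm1 hd1
      have hc22 := card_two hn _ hs2 hm2 hd2
      have hdvd : ∀ v, 1 ≤ v → v ≤ n → ∀ T : Finset (Finset ℕ),
          (∀ σ, m σ ≠ 0 → v ∈ σ → σ ∈ T) → (∀ σ ∈ T, v ∈ σ) →
          ∑ σ ∈ T, m σ = if v ≤ n-4 then 2 else 1 := by
        intro v h1 h2 T hT hT2
        rw [← deg_eq_sum m v T hT hT2]
        exact hdeg' v h1 h2
      have eqn5 : m {1, n} + m {n-1, n} = 1 := by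
        have h := hdvd n (by omega) (le_rfl) {{1, n}, {n-1, n}}
          (fun σ hσ hvv => by
            rcases classify hn σ (hsupp σ hσ) (hc2 σ hσ) n hvv with
              ⟨i,hi1,hi2,hvi,rfl⟩|⟨hvi,rfl⟩|⟨hvi,rfl⟩|⟨hvi,rfl⟩|⟨hvi,rfl⟩|⟨hvi,rfl⟩|⟨hvi,rfl⟩
            · exact absurd hvi (by omega)
            · exact absurd hvi (by omega)
            · exact absurd hvi (by omega)
            · exact absurd hvi (by omega)
            · exact absurd hvi (by omega)
            · simp
            · simp
            )
          (fun σ hσ => by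
            simp only [Finset.mem_insert, Finset.mem_singleton] at hσ
            rcases hσ with rfl | rfl <;>
              (simp only [Finset.mem_insert, Finset.mem_singleton, eq_self_iff_true, or_true, true_or] <;> omega))
        rwa [Finset.sum_pair (show ({1, n} : Finset ℕ) ≠ {n-1, n} by rw [Ne, pair_eq_pair_iff]; omega),
          if_neg (show ¬ n ≤ n-4 by omega)] at h
      have eqn4 : m {1, n-1} + m {n-1, n} = 1 := by
        have h := hdvd (n-1) (by omega) (by omega) {{1, n-1}, {n-1, n}}
          (fun σ hσ hvv => by
            rcases classify hn σ (hsupp σ hσ) (hc2 σ hσ) (n-1) hvv with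
              ⟨i,hi1,hi2,hvi,rfl⟩|⟨hvi,rfl⟩|⟨hvi,rfl⟩|⟨hvi,rfl⟩|⟨hvi,rfl⟩|⟨hvi,rfl⟩|⟨hvi,rfl⟩
            · exact absurd hvi (by omega)
            · exact absurd hvi (by omega)
            · exact absurd hvi (by omega)
            · exact absurd hvi (by omega)
            · simp
            · exact absurd hvi (by omega)
            · simp
            )
          (fun σ hσ => by
            simp only [Finset.mem_insert, Finset.mem_singleton] at hσ
            rcases hσ with rfl | rfl <;>
              (simp only [Finset.mem_insert, Finset.mem_singleton, eq_self_iff_true, or_true, true_or] <;> omega))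
        rwa [Finset.sum_pair (show ({1, n-1} : Finset ℕ) ≠ {n-1, n} by rw [Ne, pair_eq_pair_iff]; omega),
          if_neg (show ¬ n-1 ≤ n-4 by omega)] at h
      have eqn3 : m {n-4, n-2} + m {n-3, n-2} = 1 := by
        have h := hdvd (n-2) (by omega) (by omega) {{n-4, n-2}, {n-3, n-2}}
          (fun σ hσ hvv => by
            rcases classify hn σ (hsupp σ hσ) (hc2 σ hσ) (n-2) hvv with
              ⟨i,hi1,hi2,hvi,rfl⟩|⟨hvi,rfl⟩|⟨hvi,rfl⟩|⟨hvi,rfl⟩|⟨hvi,rfl⟩|⟨hvi,rfl⟩|⟨hvi,rfl⟩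
            · exact absurd hvi (by omega)
            · exact absurd hvi (by omega)
            · simp
            · simp
            · exact absurd hvi (by omega)
            · exact absurd hvi (by omega)
            · exact absurd hvi (by omega)
            )
          (fun σ hσ => by
            simp only [Finset.mem_insert, Finset.mem_singleton] at hσ
            rcases hσ with rfl | rfl <;>
              (simp only [Finset.mem_insert, Finset.mem_singleton, eq_self_iff_true, or_true, true_or] <;> omega))
        rwa [Finset.sum_pair (show ({n-4, n-2} : Finset ℕ) ≠ {n-3, n-2} by rw [Ne, pair_eq_pair_iff]; omega),
          if_neg (show ¬ n-2 ≤ n-4 by omega)] at h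
      have eqn2 : m {n-4, n-3} + m {n-3, n-2} = 1 := by
        have h := hdvd (n-3) (by omega) (by omega) {{n-4, n-3}, {n-3, n-2}}
          (fun σ hσ hvv => by
            rcases classify hn σ (hsupp σ hσ) (hc2 σ hσ) (n-3) hvv with
              ⟨i,hi1,hi2,hvi,rfl⟩|⟨hvi,rfl⟩|⟨hvi,rfl⟩|⟨hvi,rfl⟩|⟨hvi,rfl⟩|⟨hvi,rfl⟩|⟨hvi,rfl⟩
            · exact absurd hvi (by omega)
            · simp
            · exact absurd hvi (by omega)
            · simp
            · exact absurd hvi (by omega)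
            · exact absurd hvi (by omega)
            · exact absurd hvi (by omega)
            )
          (fun σ hσ => by
            simp only [Finset.mem_insert, Finset.mem_singleton] at hσ
            rcases hσ with rfl | rfl <;>
              (simp only [Finset.mem_insert, Finset.mem_singleton, eq_self_iff_true, or_true, true_or] <;> omega))
        rwa [Finset.sum_pair (show ({n-4, n-3} : Finset ℕ) ≠ {n-3, n-2} by rw [Ne, pair_eq_pair_iff]; omega),
          if_neg (show ¬ n-3 ≤ n-4 by omega)] at h
      have eqP : ∀ v, 2 ≤ v → v ≤ n-5 → m {v-1, v-1+1} + m {v, v+1} = 2 := by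
        intro v hpv1 hpv2
        have h := hdvd v (by omega) (by omega) {{v-1, v-1+1}, {v, v+1}}
          (fun σ hσ hvv => by
            rcases classify hn σ (hsupp σ hσ) (hc2 σ hσ) v hvv with
              ⟨i,hi1,hi2,hvi,rfl⟩|⟨hvi,rfl⟩|⟨hvi,rfl⟩|⟨hvi,rfl⟩|⟨hvi,rfl⟩|⟨hvi,rfl⟩|⟨hvi,rfl⟩
            · rcases hvi with rfl | hvi
              · simp
              · have hiv : i = v - 1 := by omega
                subst hiv
                simp
            · exact absurd hvi (by omega)
            · exact absurd hvi (by omega)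
            · exact absurd hvi (by omega)
            · exact absurd hvi (by omega)
            · exact absurd hvi (by omega)
            · exact absurd hvi (by omega)
            )
          (fun σ hσ => by
            simp only [Finset.mem_insert, Finset.mem_singleton] at hσ
            rcases hσ with rfl | rfl <;>
              (simp only [Finset.mem_insert, Finset.mem_singleton, eq_self_iff_true, or_true, true_or] <;> omega))
        rwa [Finset.sum_pair (show ({v-1, v-1+1} : Finset ℕ) ≠ {v, v+1} by rw [Ne, pair_eq_pair_iff]; omega),
          if_pos (show v ≤ n-4 by omega)] at h
      rcases (show m {n-1, n} = 1 ∨ m {n-1, n} = 0 by omega) with hc | hc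
      · have F1 : m {1, n-1} = 0 := by omega
        have F2 : m {1, n} = 0 := by omega
        have key : (∀ i, 1 ≤ i → i ≤ n-5 → m {i, i+1} = 2*(i%2)) ∧
            m {n-4, n-3} = n%2 ∧ m {n-4, n-2} = n%2 ∧ m {n-3, n-2} = 1-(n%2) := by
          by_cases h6 : 6 ≤ n
          ·
            have eqv1 : m {1, 1+1} + (m {1, n-1} + m {1, n}) = 2 := by
              have h := hdvd 1 (by omega) (by omega) {{1, 1+1}, {1, n-1}, {1, n}}
                (fun σ hσ hvv => by
                  rcases classify hn σ (hsupp σ hσ) (hc2 σ hσ) 1 hvv with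
                    ⟨i,hi1,hi2,hvi,rfl⟩|⟨hvi,rfl⟩|⟨hvi,rfl⟩|⟨hvi,rfl⟩|⟨hvi,rfl⟩|⟨hvi,rfl⟩|⟨hvi,rfl⟩
                  · have hiv : i = 1 := by omega
                    subst hiv
                    simp
                  · exact absurd hvi (by omega)
                  · exact absurd hvi (by omega)
                  · exact absurd hvi (by omega)
                  · simp
                  · simp
                  · exact absurd hvi (by omega)
                  )
                (fun σ hσ => by
                  simp only [Finset.mem_insert, Finset.mem_singleton] at hσ
                  rcases hσ with rfl | rfl | rfl <;>
                    (simp only [Finset.mem_insert, Finset.mem_singleton, eq_self_iff_true, or_true, true_or] <;> omega))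
              rwa [Finset.sum_insert (show ({1, 1+1} : Finset ℕ) ∉ ({{1, n-1}, {1, n}} : Finset (Finset ℕ)) by simp only [Finset.mem_insert, Finset.mem_singleton, pair_eq_pair_iff]; omega), Finset.sum_pair (show ({1, n-1} : Finset ℕ) ≠ {1, n} by rw [Ne, pair_eq_pair_iff]; omega),
                if_pos (show (1:ℕ) ≤ n-4 by omega)] at h
            have eqv4 : m {n-5, n-5+1} + (m {n-4, n-3} + m {n-4, n-2}) = 2 := by
              have h := hdvd (n-4) (by omega) (by omega) {{n-5, n-5+1}, {n-4, n-3}, {n-4, n-2}}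
                (fun σ hσ hvv => by
                  rcases classify hn σ (hsupp σ hσ) (hc2 σ hσ) (n-4) hvv with
                    ⟨i,hi1,hi2,hvi,rfl⟩|⟨hvi,rfl⟩|⟨hvi,rfl⟩|⟨hvi,rfl⟩|⟨hvi,rfl⟩|⟨hvi,rfl⟩|⟨hvi,rfl⟩
                  · have hiv : i = n - 5 := by omega
                    subst hiv
                    simp
                  · simp
                  · simp
                  · exact absurd hvi (by omega)
                  · exact absurd hvi (by omega)
                  · exact absurd hvi (by omega)
                  · exact absurd hvi (by omega)
                  )
                (fun σ hσ => by
                  simp only [Finset.mem_insert, Finset.mem_singleton] at hσ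
                  rcases hσ with rfl | rfl | rfl <;>
                    (simp only [Finset.mem_insert, Finset.mem_singleton, eq_self_iff_true, or_true, true_or] <;> omega))
              rwa [Finset.sum_insert (show ({n-5, n-5+1} : Finset ℕ) ∉ ({{n-4, n-3}, {n-4, n-2}} : Finset (Finset ℕ)) by simp only [Finset.mem_insert, Finset.mem_singleton, pair_eq_pair_iff]; omega), Finset.sum_pair (show ({n-4, n-3} : Finset ℕ) ≠ {n-4, n-2} by rw [Ne, pair_eq_pair_iff]; omega),
                if_pos (show n-4 ≤ n-4 by omega)] at h
            have hp1 : m {1, 1+1} = 2 := by omega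
            have F7 : ∀ i, 1 ≤ i → i ≤ n-5 → m {i, i+1} = 2*(i%2) := by
              intro i
              induction i with
              | zero => intro hh1 hh2; exact absurd hh1 (by omega)
              | succ k ih =>
                intro hh1 hh2
                by_cases hk : k = 0
                · subst hk
                  norm_num
                  norm_num at hp1
                  exact hp1
                · have e := eqP (k+1) (by omega) hh2
                  have hik := ih (by omega) (by omega)
                  norm_num at e ⊢
                  omega
            have FP := F7 (n-5) (by omega) le_rfl
            exact ⟨F7, by omega, by omega, by omega⟩
          · have h5 : n = 5 := by omega
            have eqv5 : m {n-4, n-3} + (m {n-4, n-2} + (m {1, n-1} + m {1, n})) = 2 := by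
              have h := hdvd 1 (by omega) (by omega) {{n-4, n-3}, {n-4, n-2}, {1, n-1}, {1, n}}
                (fun σ hσ hvv => by
                  rcases classify hn σ (hsupp σ hσ) (hc2 σ hσ) 1 hvv with
                    ⟨i,hi1,hi2,hvi,rfl⟩|⟨hvi,rfl⟩|⟨hvi,rfl⟩|⟨hvi,rfl⟩|⟨hvi,rfl⟩|⟨hvi,rfl⟩|⟨hvi,rfl⟩
                  · exact absurd hi1 (by omega)
                  · simp
                  · simp
                  · exact absurd hvi (by omega)
                  · simp
                  · simp
                  · exact absurd hvi (by omega)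
                  )
                (fun σ hσ => by
                  simp only [Finset.mem_insert, Finset.mem_singleton] at hσ
                  rcases hσ with rfl | rfl | rfl | rfl <;>
                    (simp only [Finset.mem_insert, Finset.mem_singleton, eq_self_iff_true, or_true, true_or] <;> omega))
              rwa [Finset.sum_insert (show ({n-4, n-3} : Finset ℕ) ∉ ({{n-4, n-2}, {1, n-1}, {1, n}} : Finset (Finset ℕ)) by simp only [Finset.mem_insert, Finset.mem_singleton, pair_eq_pair_iff]; omega), Finset.sum_insert (show ({n-4, n-2} : Finset ℕ) ∉ ({{1, n-1}, {1, n}} : Finset (Finset ℕ)) by simp only [Finset.mem_insert, Finset.mem_singleton, pair_eq_pair_iff]; omega), Finset.sum_pair (show ({1, n-1} : Finset ℕ) ≠ {1, n} by rw [Ne, pair_eq_pair_iff]; omega),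
                if_pos (show (1:ℕ) ≤ n-4 by omega)] at h
            exact ⟨fun i hi1 hi2 => absurd hi1 (by omega), by omega, by omega, by omega⟩
        obtain ⟨F7, FA1, FA2, FA3⟩ := key
        left
        apply Finsupp.ext
        intro σ
        by_cases hσ : σ ∈ graphComplex n
        · rcases hσ with rfl | ⟨i,hi1,hi2,rfl⟩ | ⟨i,hi1,hi2,rfl⟩ | rfl | rfl | rfl | rfl | rfl | rfl
          · have z1 : m ∅ = 0 := by by_contra hz; have := hc2 _ hz; simp at this
            have z2 : msol n ((n-4)/2) 1 (n%2) 0 ∅ = 0 := by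
              by_contra hz; have := hc21 _ hz; simp at this
            rw [z1, z2]
          · have z1 : m {i} = 0 := by by_contra hz; have := hc2 _ hz; simp at this
            have z2 : msol n ((n-4)/2) 1 (n%2) 0 {i} = 0 := by
              by_contra hz; have := hc21 _ hz; simp at this
            rw [z1, z2]
          · rw [F7 i hi1 hi2, msol_pair hn hi1 hi2 (by norm_num)]
            by_cases hpar : i % 2 = 1
            · rw [if_pos ⟨by omega, by omega, by omega⟩]
              omega
            · rw [if_neg (by omega)]
              omega
          · rw [FA1, msol_A1 hn (by norm_num) hq1]
          · rw [FA2, msol_A2 hn (by norm_num) hq1]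
          · rw [FA3, msol_A3 hn (by norm_num) hq1]
          · rw [F1, msol_B1 hn (by norm_num) hq1]
          · rw [F2, msol_B2 hn (by norm_num) hq1]
          · rw [hc, msol_B3 hn (by norm_num) hq1]
        · have z1 : m σ = 0 := by by_contra hz; exact hσ (hsupp σ hz)
          have z2 : msol n ((n-4)/2) 1 (n%2) 0 σ = 0 := by
            by_contra hz; exact hσ (hs1 σ hz)
          rw [z1, z2]
      · have F1 : m {1, n-1} = 1 := by omega
        have F2 : m {1, n} = 1 := by omega
        have key : (∀ i, 1 ≤ i → i ≤ n-5 → m {i, i+1} = 2*((i+1)%2)) ∧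
            m {n-4, n-3} = 1-n%2 ∧ m {n-4, n-2} = 1-n%2 ∧ m {n-3, n-2} = 1-(1-n%2) := by
          by_cases h6 : 6 ≤ n
          ·
            have eqv1 : m {1, 1+1} + (m {1, n-1} + m {1, n}) = 2 := by
              have h := hdvd 1 (by omega) (by omega) {{1, 1+1}, {1, n-1}, {1, n}}
                (fun σ hσ hvv => by
                  rcases classify hn σ (hsupp σ hσ) (hc2 σ hσ) 1 hvv with
                    ⟨i,hi1,hi2,hvi,rfl⟩|⟨hvi,rfl⟩|⟨hvi,rfl⟩|⟨hvi,rfl⟩|⟨hvi,rfl⟩|⟨hvi,rfl⟩|⟨hvi,rfl⟩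
                  · have hiv : i = 1 := by omega
                    subst hiv
                    simp
                  · exact absurd hvi (by omega)
                  · exact absurd hvi (by omega)
                  · exact absurd hvi (by omega)
                  · simp
                  · simp
                  · exact absurd hvi (by omega)
                  )
                (fun σ hσ => by
                  simp only [Finset.mem_insert, Finset.mem_singleton] at hσ
                  rcases hσ with rfl | rfl | rfl <;>
                    (simp only [Finset.mem_insert, Finset.mem_singleton, eq_self_iff_true, or_true, true_or] <;> omega))
              rwa [Finset.sum_insert (show ({1, 1+1} : Finset ℕ) ∉ ({{1, n-1}, {1, n}} : Finset (Finset ℕ)) by simp only [Finset.mem_insert, Finset.mem_singleton, pair_eq_pair_iff]; omega), Finset.sum_pair (show ({1, n-1} : Finset ℕ) ≠ {1, n} by rw [Ne, pair_eq_pair_iff]; omega),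
                if_pos (show (1:ℕ) ≤ n-4 by omega)] at h
            have eqv4 : m {n-5, n-5+1} + (m {n-4, n-3} + m {n-4, n-2}) = 2 := by
              have h := hdvd (n-4) (by omega) (by omega) {{n-5, n-5+1}, {n-4, n-3}, {n-4, n-2}}
                (fun σ hσ hvv => by
                  rcases classify hn σ (hsupp σ hσ) (hc2 σ hσ) (n-4) hvv with
                    ⟨i,hi1,hi2,hvi,rfl⟩|⟨hvi,rfl⟩|⟨hvi,rfl⟩|⟨hvi,rfl⟩|⟨hvi,rfl⟩|⟨hvi,rfl⟩|⟨hvi,rfl⟩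
                  · have hiv : i = n - 5 := by omega
                    subst hiv
                    simp
                  · simp
                  · simp
                  · exact absurd hvi (by omega)
                  · exact absurd hvi (by omega)
                  · exact absurd hvi (by omega)
                  · exact absurd hvi (by omega)
                  )
                (fun σ hσ => by
                  simp only [Finset.mem_insert, Finset.mem_singleton] at hσ
                  rcases hσ with rfl | rfl | rfl <;>
                    (simp only [Finset.mem_insert, Finset.mem_singleton, eq_self_iff_true, or_true, true_or] <;> omega))
              rwa [Finset.sum_insert (show ({n-5, n-5+1} : Finset ℕ) ∉ ({{n-4, n-3}, {n-4, n-2}} : Finset (Finset ℕ)) by simp only [Finset.mem_insert, Finset.mem_singleton, pair_eq_pair_iff]; omega), Finset.sum_pair (show ({n-4, n-3} : Finset ℕ) ≠ {n-4, n-2} by rw [Ne, pair_eq_pair_iff]; omega),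
                if_pos (show n-4 ≤ n-4 by omega)] at h
            have hp1 : m {1, 1+1} = 0 := by omega
            have F7 : ∀ i, 1 ≤ i → i ≤ n-5 → m {i, i+1} = 2*((i+1)%2) := by
              intro i
              induction i with
              | zero => intro hh1 hh2; exact absurd hh1 (by omega)
              | succ k ih =>
                intro hh1 hh2
                by_cases hk : k = 0
                · subst hk
                  norm_num
                  norm_num at hp1
                  exact hp1
                · have e := eqP (k+1) (by omega) hh2
                  have hik := ih (by omega) (by omega)
                  norm_num at e ⊢
                  omega
            have FP := F7 (n-5) (by omega) le_rfl
            exact ⟨F7, by omega, by omega, by omega⟩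
          · have h5 : n = 5 := by omega
            have eqv5 : m {n-4, n-3} + (m {n-4, n-2} + (m {1, n-1} + m {1, n})) = 2 := by
              have h := hdvd 1 (by omega) (by omega) {{n-4, n-3}, {n-4, n-2}, {1, n-1}, {1, n}}
                (fun σ hσ hvv => by
                  rcases classify hn σ (hsupp σ hσ) (hc2 σ hσ) 1 hvv with
                    ⟨i,hi1,hi2,hvi,rfl⟩|⟨hvi,rfl⟩|⟨hvi,rfl⟩|⟨hvi,rfl⟩|⟨hvi,rfl⟩|⟨hvi,rfl⟩|⟨hvi,rfl⟩
                  · exact absurd hi1 (by omega)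
                  · simp
                  · simp
                  · exact absurd hvi (by omega)
                  · simp
                  · simp
                  · exact absurd hvi (by omega)
                  )
                (fun σ hσ => by
                  simp only [Finset.mem_insert, Finset.mem_singleton] at hσ
                  rcases hσ with rfl | rfl | rfl | rfl <;>
                    (simp only [Finset.mem_insert, Finset.mem_singleton, eq_self_iff_true, or_true, true_or] <;> omega))
              rwa [Finset.sum_insert (show ({n-4, n-3} : Finset ℕ) ∉ ({{n-4, n-2}, {1, n-1}, {1, n}} : Finset (Finset ℕ)) by simp only [Finset.mem_insert, Finset.mem_singleton, pair_eq_pair_iff]; omega), Finset.sum_insert (show ({n-4, n-2} : Finset ℕ) ∉ ({{1, n-1}, {1, n}} : Finset (Finset ℕ)) by simp only [Finset.mem_insert, Finset.mem_singleton, pair_eq_pair_iff]; omega), Finset.sum_pair (show ({1, n-1} : Finset ℕ) ≠ {1, n} by rw [Ne, pair_eq_pair_iff]; omega),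
                if_pos (show (1:ℕ) ≤ n-4 by omega)] at h
            exact ⟨fun i hi1 hi2 => absurd hi1 (by omega), by omega, by omega, by omega⟩
        obtain ⟨F7, FA1, FA2, FA3⟩ := key
        right
        apply Finsupp.ext
        intro σ
        by_cases hσ : σ ∈ graphComplex n
        · rcases hσ with rfl | ⟨i,hi1,hi2,rfl⟩ | ⟨i,hi1,hi2,rfl⟩ | rfl | rfl | rfl | rfl | rfl | rfl
          · have z1 : m ∅ = 0 := by by_contra hz; have := hc2 _ hz; simp at this
            have z2 : msol n ((n-5)/2) 2 (1-n%2) 1 ∅ = 0 := by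
              by_contra hz; have := hc22 _ hz; simp at this
            rw [z1, z2]
          · have z1 : m {i} = 0 := by by_contra hz; have := hc2 _ hz; simp at this
            have z2 : msol n ((n-5)/2) 2 (1-n%2) 1 {i} = 0 := by
              by_contra hz; have := hc22 _ hz; simp at this
            rw [z1, z2]
          · rw [F7 i hi1 hi2, msol_pair hn hi1 hi2 (by norm_num)]
            by_cases hpar : i % 2 = 0
            · rw [if_pos ⟨by omega, by omega, by omega⟩]
              omega
            · rw [if_neg (by omega)]
              omega
          · rw [FA1, msol_A1 hn (by norm_num) hq2]
          · rw [FA2, msol_A2 hn (by norm_num) hq2]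
          · rw [FA3, msol_A3 hn (by norm_num) hq2]
          · rw [F1, msol_B1 hn (by norm_num) hq2]
          · rw [F2, msol_B2 hn (by norm_num) hq2]
          · rw [hc, msol_B3 hn (by norm_num) hq2]
        · have z1 : m σ = 0 := by by_contra hz; exact hσ (hsupp σ hz)
          have z2 : msol n ((n-5)/2) 2 (1-n%2) 1 σ = 0 := by
            by_contra hz; exact hσ (hs2 σ hz)
          rw [z1, z2]
    · rintro (rfl | rfl)
      · exact ⟨hs1, hm1, hd1⟩
      · exact ⟨hs2, hm2, hd2⟩
end

section
/- Fix n ≥ 1 and let all d i = 2 (binary tensors). For every simplicial complex Σ on Fin n there exists a tensor P of format d with nonnegative entries summing to 1 such that, for every finset σ ⊆ Fin n, the marginalization P_σ has rank at most one if and only if σ ∈ Σ. -/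
open scoped symmDiff

section BinaryTensorAux

noncomputable def sgn : Fin 2 → ℝ := fun a => if a = 0 then 1 else -1

lemma sgn_zero : sgn 0 = 1 := by simp [sgn]
lemma sgn_one : sgn 1 = -1 := by simp [sgn]
lemma sgn_mul_self (a : Fin 2) : sgn a * sgn a = 1 := by fin_cases a <;> simp [sgn]
lemma abs_sgn (a : Fin 2) : |sgn a| = 1 := by fin_cases a <;> simp [sgn]

lemma sum_prod_two {ι : Type} [Fintype ι] [DecidableEq ι] (g : ι → Fin 2 → ℝ) :
    ∑ x : (∀ _ : ι, Fin 2), ∏ i, g i (x i) = ∏ i, (g i 0 + g i 1) := by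
  calc ∑ x : (∀ _ : ι, Fin 2), ∏ i, g i (x i) = ∏ i, ∑ a : Fin 2, g i a :=
        (Fintype.prod_sum g).symm
    _ = ∏ i, (g i 0 + g i 1) := by simp [Fin.sum_univ_two]

lemma prod_sgn_sq {n : ℕ} (t : Finset (Fin n)) (x : Fin n → Fin 2) :
    (∏ i ∈ t, sgn (x i)) * (∏ i ∈ t, sgn (x i)) = 1 := by
  rw [← Finset.prod_mul_distrib]
  simp [sgn_mul_self]

lemma chi_mul {n : ℕ} (t u : Finset (Fin n)) (x : Fin n → Fin 2) :
    (∏ i ∈ t, sgn (x i)) * (∏ i ∈ u, sgn (x i)) = ∏ i ∈ t ∆ u, sgn (x i) := by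
  have key : t ∆ u = (t \ u) ∪ (u \ t) := by
    rw [symmDiff_def]; rfl
  rw [key, Finset.prod_union disjoint_sdiff_sdiff]
  have ht : (∏ i ∈ t, sgn (x i)) = (∏ i ∈ t \ u, sgn (x i)) * ∏ i ∈ t ∩ u, sgn (x i) := by
    rw [← Finset.prod_union (Finset.disjoint_sdiff_inter t u), Finset.sdiff_union_inter]
  have hu : (∏ i ∈ u, sgn (x i)) = (∏ i ∈ u \ t, sgn (x i)) * ∏ i ∈ u ∩ t, sgn (x i) := by
    rw [← Finset.prod_union (Finset.disjoint_sdiff_inter u t), Finset.sdiff_union_inter]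
  rw [ht, hu, Finset.inter_comm u t, mul_mul_mul_comm, prod_sgn_sq, mul_one]

lemma sum_chi_constrained {n : ℕ} (τ σ : Finset (Fin n)) (y : Fin n → Fin 2) :
    ∑ x : (∀ _ : Fin n, Fin 2), (∏ i ∈ τ, sgn (x i)) * (if ∀ i ∈ σ, x i = y i then (1:ℝ) else 0)
      = if τ ⊆ σ then (∏ i ∈ τ, sgn (y i)) * 2 ^ (n - σ.card) else 0 := by
  classical
  set g : Fin n → Fin 2 → ℝ := fun i a =>
    (if i ∈ τ then sgn a else 1) * (if i ∈ σ then (if a = y i then 1 else 0) else 1) with hg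
  have h1 : ∀ x : (∀ _ : Fin n, Fin 2),
      (∏ i ∈ τ, sgn (x i)) * (if ∀ i ∈ σ, x i = y i then (1:ℝ) else 0) = ∏ i, g i (x i) := by
    intro x
    simp only [hg, Finset.prod_mul_distrib, Finset.prod_ite_mem, Finset.univ_inter,
      Finset.prod_boole]
    congr
  rw [Finset.sum_congr rfl fun x _ => h1 x, sum_prod_two g]
  have h2 : ∀ a : Fin 2, a = 0 ∨ a = 1 := by decide
  by_cases hτσ : τ ⊆ σ
  · rw [if_pos hτσ]
    have hfac : ∀ i, g i 0 + g i 1 = if i ∈ τ then sgn (y i) else if i ∈ σ then 1 else 2 := by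
      intro i
      by_cases hiτ : i ∈ τ
      · have hiσ : i ∈ σ := hτσ hiτ
        rcases h2 (y i) with h | h <;> simp [hg, hiτ, hiσ, h, sgn]
      · by_cases hiσ : i ∈ σ
        · rcases h2 (y i) with h | h <;> simp [hg, hiτ, hiσ, h]
        · simp [hg, hiτ, hiσ]; norm_num
    rw [Finset.prod_congr rfl fun i _ => hfac i, ← Finset.prod_mul_prod_compl σ]
    have hcompl : (∏ i ∈ σᶜ, if i ∈ τ then sgn (y i) else if i ∈ σ then 1 else (2:ℝ))
        = 2 ^ (n - σ.card) := by
      calc (∏ i ∈ σᶜ, if i ∈ τ then sgn (y i) else if i ∈ σ then 1 else (2:ℝ))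
          = ∏ _i ∈ σᶜ, (2:ℝ) := Finset.prod_congr rfl (fun i hi => by
            have hiσ : i ∉ σ := Finset.mem_compl.mp hi
            have hiτ : i ∉ τ := fun h => hiσ (hτσ h)
            simp [hiτ, hiσ])
        _ = 2 ^ (n - σ.card) := by rw [Finset.prod_const, Finset.card_compl, Fintype.card_fin]
    have hin : (∏ i ∈ σ, if i ∈ τ then sgn (y i) else if i ∈ σ then 1 else (2:ℝ))
        = ∏ i ∈ τ, sgn (y i) := by
      rw [← Finset.prod_sdiff hτσ]
      have h3 : (∏ i ∈ σ \ τ, if i ∈ τ then sgn (y i) else if i ∈ σ then 1 else (2:ℝ)) = 1 :=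
        Finset.prod_eq_one (fun i hi => by
          simp [(Finset.mem_sdiff.mp hi).2, (Finset.mem_sdiff.mp hi).1])
      have h4 : (∏ i ∈ τ, if i ∈ τ then sgn (y i) else if i ∈ σ then 1 else (2:ℝ))
          = ∏ i ∈ τ, sgn (y i) := Finset.prod_congr rfl (fun i hi => by simp [hi])
      rw [h3, h4, one_mul]
    rw [hcompl, hin]
  · rw [if_neg hτσ]
    obtain ⟨j, hjτ, hjσ⟩ := Finset.not_subset.mp hτσ
    apply Finset.prod_eq_zero (Finset.mem_univ j)
    simp [hg, hjτ, hjσ, sgn]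

lemma moment_transfer {n : ℕ} (P : (∀ _ : Fin n, Fin 2) → ℝ) (σ : Finset (Fin n))
    (w : Fin n → Fin 2 → ℝ) :
    ∑ y : (∀ i : σ, Fin 2), (∏ i : σ, w i (y i)) * marg (d := fun _ => 2) P σ y
      = ∑ x : (∀ _ : Fin n, Fin 2), (∏ i ∈ σ, w i (x i)) * P x := by
  classical
  simp only [marg, Finset.mul_sum]
  rw [Finset.sum_comm]
  refine Finset.sum_congr rfl fun x _ => ?_
  have h1 : ∀ y : (∀ i : σ, Fin 2),
      ((∏ i : σ, w i (y i)) * if ∀ i : σ, x i = y i then P x else 0)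
        = if (fun i : σ => x i) = y then (∏ i : σ, w i (y i)) * P x else 0 := by
    intro y
    rw [mul_ite, mul_zero]
    exact if_congr funext_iff.symm rfl rfl
  rw [Finset.sum_congr rfl fun y _ => h1 y, Finset.sum_ite_eq, if_pos (Finset.mem_univ _)]
  congr 1
  exact Finset.prod_coe_sort σ (fun j => w j (x j))

end BinaryTensorAux

/-- Every simplicial complex on `Fin n` is realized by some binary
probability tensor: there is a tensor `P` with nonnegative entries summing to `1`
such that, for every finset `σ ⊆ Fin n`, the marginalization `P_σ` has rank at most
one if and only if `σ` is a face of the complex. -/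
theorem complex_realized_by_binary_tensor (n : ℕ) (hn : 1 ≤ n)
    (S : Set (Finset (Fin n)))
    (hdown : ∀ σ ∈ S, ∀ τ ⊆ σ, τ ∈ S) (hsingle : ∀ i : Fin n, {i} ∈ S) :
    ∃ P : (∀ _ : Fin n, Fin 2) → ℝ,
      (∀ x, 0 ≤ P x) ∧ (∑ x, P x = 1) ∧
      ∀ σ : Finset (Fin n),
        RankOneOn (marg (d := fun _ => 2) P σ) ↔ σ ∈ S := by
  classical
  have hempty : ∅ ∈ S := hdown {⟨0, hn⟩} (hsingle ⟨0, hn⟩) ∅ (Finset.empty_subset _)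
  set K : Finset (Finset (Fin n)) := Finset.univ.filter (fun τ => τ ∉ S) with hK
  set c : ℝ := ((2:ℝ) ^ n)⁻¹ with hc
  set ε : ℝ := ((2:ℝ) ^ n)⁻¹ / 2 with hε
  have h2n : (0:ℝ) < 2 ^ n := by positivity
  have hεpos : 0 < ε := by rw [hε]; positivity
  have hcpos : 0 < c := by rw [hc]; positivity
  have hc2 : c * 2 ^ n = 1 := inv_mul_cancel₀ (ne_of_gt h2n)
  have hε2 : ε * 2 ^ n = 1 / 2 := by rw [hε]; field_simp
  have hKnotmem : ∅ ∉ K := by simp [hK, hempty]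
  set P : (∀ _ : Fin n, Fin 2) → ℝ :=
    fun x => c * (1 + ε * ∑ τ ∈ K, ∏ i ∈ τ, sgn (x i)) with hP
  -- the moments of P
  have momP : ∀ t : Finset (Fin n),
      ∑ x : (∀ _ : Fin n, Fin 2), (∏ i ∈ t, sgn (x i)) * P x
        = (if t = ∅ then 1 else 0) + (if t ∈ K then ε else 0) := by
    intro t
    have hsum0 : ∀ u : Finset (Fin n),
        ∑ x : (∀ _ : Fin n, Fin 2), (∏ i ∈ u, sgn (x i)) = if u = ∅ then (2:ℝ)^n else 0 := by
      intro u
      have h := sum_chi_constrained u ∅ (fun _ => 0)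
      simp only [Finset.notMem_empty, false_implies, implies_true, if_true, mul_one,
        Finset.subset_empty, Finset.card_empty, Nat.sub_zero] at h
      rw [h]
      by_cases hu : u = ∅ <;> simp [hu]
    have step1 : ∀ x : (∀ _ : Fin n, Fin 2), (∏ i ∈ t, sgn (x i)) * P x
        = c * ((∏ i ∈ t, sgn (x i))
            + ε * ∑ τ ∈ K, (∏ i ∈ t, sgn (x i)) * ∏ i ∈ τ, sgn (x i)) := by
      intro x; rw [hP]; dsimp only; rw [← Finset.mul_sum]; ring
    rw [Finset.sum_congr rfl fun x _ => step1 x, ← Finset.mul_sum, Finset.sum_add_distrib,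
      ← Finset.mul_sum, Finset.sum_comm]
    have horth : ∀ τ : Finset (Fin n),
        ∑ x : (∀ _ : Fin n, Fin 2), (∏ i ∈ t, sgn (x i)) * ∏ i ∈ τ, sgn (x i)
          = if t = τ then (2:ℝ)^n else 0 := by
      intro τ
      rw [Finset.sum_congr rfl fun x _ => chi_mul t τ x, hsum0 (t ∆ τ)]
      congr 1
      simp [Finset.symmDiff_eq_empty]
    rw [Finset.sum_congr rfl fun τ _ => horth τ, Finset.sum_ite_eq, hsum0 t]
    by_cases h1 : t = ∅
    · subst h1
      rw [if_pos rfl, if_pos rfl, if_neg hKnotmem, if_neg hKnotmem]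
      linear_combination hc2
    · rw [if_neg h1, if_neg h1]
      by_cases h2 : t ∈ K
      · rw [if_pos h2, if_pos h2]
        linear_combination ε * hc2
      · rw [if_neg h2, if_neg h2]
        ring
  refine ⟨P, ?_, ?_, ?_⟩
  · -- nonnegativity
    intro x
    have hb : ∀ τ ∈ K, (-1:ℝ) ≤ ∏ i ∈ τ, sgn (x i) := by
      intro τ _
      have habs : |∏ i ∈ τ, sgn (x i)| = 1 := by
        rw [Finset.abs_prod]
        simp [abs_sgn]
      nlinarith [abs_nonneg (∏ i ∈ τ, sgn (x i)), le_abs_self (∏ i ∈ τ, sgn (x i)),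
        neg_abs_le (∏ i ∈ τ, sgn (x i))]
    have hKcard : (K.card : ℝ) ≤ 2 ^ n := by
      have h1 : K.card ≤ 2 ^ n := by
        calc K.card ≤ Finset.univ.card := Finset.card_le_card (Finset.subset_univ K)
          _ = 2 ^ n := by rw [Finset.card_univ, Fintype.card_finset, Fintype.card_fin]
      exact_mod_cast h1
    have hT : -(2^n : ℝ) ≤ ∑ τ ∈ K, ∏ i ∈ τ, sgn (x i) := by
      calc -(2^n:ℝ) ≤ -(K.card : ℝ) := by linarith
        _ = ∑ _τ ∈ K, (-1:ℝ) := by simp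
        _ ≤ ∑ τ ∈ K, ∏ i ∈ τ, sgn (x i) := Finset.sum_le_sum hb
    have h3 : ε * ∑ τ ∈ K, ∏ i ∈ τ, sgn (x i) ≥ -(1/2) := by
      have := mul_le_mul_of_nonneg_left hT (le_of_lt hεpos)
      nlinarith [hε2]
    rw [hP]
    have : (0:ℝ) ≤ 1 + ε * ∑ τ ∈ K, ∏ i ∈ τ, sgn (x i) := by linarith
    positivity
  · -- sums to one
    have h := momP ∅
    simp only [Finset.prod_empty, one_mul, if_pos rfl, if_neg hKnotmem, add_zero] at h
    exact h
  · -- the characterization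
    intro σ
    have hcard : σ.card ≤ n := by
      calc σ.card ≤ Finset.univ.card := Finset.card_le_card (Finset.subset_univ σ)
        _ = n := by rw [Finset.card_univ, Fintype.card_fin]
    have hpowsplit : c * 2 ^ (n - σ.card) = (1/2 : ℝ) ^ σ.card := by
      have hp : (2:ℝ) ^ (n - σ.card) * 2 ^ σ.card = 2 ^ n := pow_sub_mul_pow 2 hcard
      rw [hc, one_div, inv_pow]
      field_simp
      linarith [hp]
    constructor
    · -- rank one implies face
      rintro ⟨v, hv⟩
      by_contra hσS
      have hσK : σ ∈ K := by simp [hK, hσS]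
      have hσne : σ ≠ ∅ := fun h => hσS (h ▸ hempty)
      have key : ∀ t : Finset (Fin n), t ⊆ σ →
          (∏ i : σ, ((if (i:Fin n) ∈ t then sgn 0 else 1) * v i 0
              + (if (i:Fin n) ∈ t then sgn 1 else 1) * v i 1))
            = (if t = ∅ then 1 else 0) + (if t ∈ K then ε else 0) := by
        intro t ht
        set w : Fin n → Fin 2 → ℝ := fun j a => if j ∈ t then sgn a else 1 with hw
        have h1 := moment_transfer P σ w
        have h2 : ∀ x : (∀ _ : Fin n, Fin 2), (∏ i ∈ σ, w i (x i)) = ∏ i ∈ t, sgn (x i) := by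
          intro x
          rw [hw]; dsimp only
          rw [Finset.prod_ite_mem, Finset.inter_eq_right.mpr ht]
        simp only [h2] at h1
        have h3 : ∑ y : (∀ i : σ, Fin 2), (∏ i : σ, w i (y i)) * marg (d := fun _ => 2) P σ y
            = ∏ i : σ, (w i 0 * v i 0 + w i 1 * v i 1) := by
          calc ∑ y : (∀ i : σ, Fin 2), (∏ i : σ, w i (y i)) * marg (d := fun _ => 2) P σ y
              = ∑ y : (∀ i : σ, Fin 2), ∏ i : σ, (w i (y i) * v i (y i)) := by
                refine Finset.sum_congr rfl fun y _ => ?_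
                rw [hv y, ← Finset.prod_mul_distrib]
            _ = ∏ i : σ, (w i 0 * v i 0 + w i 1 * v i 1) :=
                sum_prod_two (ι := { x // x ∈ σ }) (fun i a => w ↑i a * v i a)
        rw [h3, momP t] at h1
        exact h1
      have hS1 : ∏ i : σ, (v i 0 + v i 1) = 1 := by
        have h := key ∅ (Finset.empty_subset σ)
        simp only [Finset.notMem_empty, if_false, one_mul, if_pos rfl,
          if_neg hKnotmem, add_zero] at h
        exact h
      have hD0 : ∀ (j : Fin n) (hj : j ∈ σ), v ⟨j, hj⟩ 0 - v ⟨j, hj⟩ 1 = 0 := by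
        intro j hj
        have hjK : {j} ∉ K := by simp [hK, hsingle j]
        have hk := key {j} (Finset.singleton_subset_iff.mpr hj)
        rw [if_neg (by simp), if_neg hjK, add_zero] at hk
        rw [← Finset.mul_prod_erase Finset.univ _ (Finset.mem_univ (⟨j, hj⟩ : σ))] at hk
        have herase : ∏ i ∈ Finset.univ.erase (⟨j, hj⟩ : σ),
            ((if (i:Fin n) ∈ ({j} : Finset (Fin n)) then sgn 0 else 1) * v i 0
              + (if (i:Fin n) ∈ ({j} : Finset (Fin n)) then sgn 1 else 1) * v i 1)
            = ∏ i ∈ Finset.univ.erase (⟨j, hj⟩ : σ), (v i 0 + v i 1) := by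
          refine Finset.prod_congr rfl fun i hi => ?_
          have hne : (i : Fin n) ≠ j := fun h => (Finset.mem_erase.mp hi).1 (Subtype.ext h)
          simp [hne]
        rw [herase] at hk
        have hfac : ((if ((⟨j, hj⟩ : σ) : Fin n) ∈ ({j} : Finset (Fin n)) then sgn 0 else 1)
            * v ⟨j, hj⟩ 0
            + (if ((⟨j, hj⟩ : σ) : Fin n) ∈ ({j} : Finset (Fin n)) then sgn 1 else 1)
            * v ⟨j, hj⟩ 1) = v ⟨j, hj⟩ 0 - v ⟨j, hj⟩ 1 := by
          rw [if_pos (by simp), if_pos (by simp), sgn_zero, sgn_one]; ring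
        rw [hfac] at hk
        have hprod_ne : ∏ i ∈ Finset.univ.erase (⟨j, hj⟩ : σ), (v i 0 + v i 1) ≠ 0 := by
          intro h0
          rw [← Finset.mul_prod_erase Finset.univ _ (Finset.mem_univ (⟨j, hj⟩ : σ)), h0,
            mul_zero] at hS1
          exact zero_ne_one hS1
        rcases mul_eq_zero.mp hk with h | h
        · exact h
        · exact absurd h hprod_ne
      have hfin : ∏ i : σ, (v i 0 - v i 1) = ε := by
        have hk := key σ (subset_refl σ)
        have hcongr : ∀ i : σ, ((if (i:Fin n) ∈ σ then sgn 0 else 1) * v i 0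
            + (if (i:Fin n) ∈ σ then sgn 1 else 1) * v i 1) = v i 0 - v i 1 := by
          intro i
          rw [if_pos i.2, if_pos i.2, sgn_zero, sgn_one]; ring
        rw [Finset.prod_congr rfl fun i _ => hcongr i, if_neg hσne, if_pos hσK, zero_add] at hk
        exact hk
      obtain ⟨j, hj⟩ := Finset.nonempty_iff_ne_empty.mpr hσne
      have hzero : ∏ i : σ, (v i 0 - v i 1) = 0 :=
        Finset.prod_eq_zero (Finset.mem_univ (⟨j, hj⟩ : σ)) (hD0 j hj)
      rw [hfin] at hzero
      exact absurd hzero (ne_of_gt hεpos)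
    · -- face implies rank one
      intro hσS
      refine ⟨fun _ _ => (1/2 : ℝ), fun y => ?_⟩
      set y' : Fin n → Fin 2 := fun j => if h : j ∈ σ then y ⟨j, h⟩ else 0 with hy'
      have hcond : ∀ x : (∀ _ : Fin n, Fin 2),
          (∀ i : σ, x i = y i) ↔ (∀ i ∈ σ, x i = y' i) := by
        intro x
        constructor
        · intro h i hi
          rw [hy']; dsimp only; rw [dif_pos hi]
          exact h ⟨i, hi⟩
        · intro h i
          have := h i i.2
          rw [hy'] at this; dsimp only at this; rw [dif_pos i.2] at this
          exact this
      have hmarg : marg (d := fun _ => 2) P σ y = c * 2 ^ (n - σ.card) := by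
        have step : ∀ x : (∀ _ : Fin n, Fin 2),
            (if ∀ i : σ, x i = y i then P x else 0)
            = c * ((∏ i ∈ (∅ : Finset (Fin n)), sgn (x i))
                * (if ∀ i ∈ σ, x i = y' i then (1:ℝ) else 0)
              + ε * ∑ τ ∈ K, (∏ i ∈ τ, sgn (x i)) * (if ∀ i ∈ σ, x i = y' i then (1:ℝ) else 0)) := by
          intro x
          rw [if_congr (hcond x) rfl rfl]
          by_cases h : ∀ i ∈ σ, x i = y' i
          · simp only [if_pos h, Finset.prod_empty, one_mul, mul_one]; rfl
          · simp only [if_neg h, mul_zero, Finset.sum_const_zero, add_zero, zero_add]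
        show (∑ x : (∀ _ : Fin n, Fin 2), if ∀ i : σ, x i = y i then P x else 0)
            = c * 2 ^ (n - σ.card)
        rw [Finset.sum_congr rfl fun x _ => step x, ← Finset.mul_sum, Finset.sum_add_distrib,
          ← Finset.mul_sum, Finset.sum_comm]
        rw [sum_chi_constrained ∅ σ y', if_pos (Finset.empty_subset σ), Finset.prod_empty]
        have hKzero : ∀ τ ∈ K,
            ∑ x : (∀ _ : Fin n, Fin 2),
              (∏ i ∈ τ, sgn (x i)) * (if ∀ i ∈ σ, x i = y' i then (1:ℝ) else 0) = 0 := by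
          intro τ hτ
          rw [sum_chi_constrained τ σ y', if_neg]
          intro hsub
          exact (Finset.mem_filter.mp hτ).2 (hdown σ hσS τ hsub)
        rw [Finset.sum_eq_zero hKzero]
        ring
      rw [hmarg, hpowsplit]
      rw [Finset.prod_const, Finset.card_univ, Fintype.card_coe]
end
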